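/- arXiv:2001.05390 — 6 statements merged into one kernel-verified Lean document; each statement's English description precedes it below -/
import Mathlib

section
/- Let K = T ∪ A be a knowledge base whose terminological part T enjoys the disjoint model union property and whose ABox is A. Then for every set S of mutually disjoint models of K and every I ∈ S, the generalized disjoint union ⊎^I S is a model of K. -/
/-! Core formalization of SROIQ(D) without the universal role,
    with the concrete domain of integer intervals. -/

namespace SROIQPaper

/-- Role expressions: role names and inverse roles. -/
inductive Rl : Type
  | name : ℕ → Rl
  | inv  : ℕ → Rl
  deriving DecidableEq

/-- SROIQ(D) concepts without the universal role; the concrete domain is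
    that of integer intervals (`∃f.[l,u]`). -/
inductive Cpt : Type
  | atom : ℕ → Cpt
  | top : Cpt
  | bot : Cpt
  | nom : ℕ → Cpt                    -- nominal {a}
  | neg : Cpt → Cpt
  | and : Cpt → Cpt → Cpt
  | or : Cpt → Cpt → Cpt
  | ex : Rl → Cpt → Cpt
  | all : Rl → Cpt → Cpt
  | atLeast : ℕ → Rl → Cpt → Cpt
  | atMost : ℕ → Rl → Cpt → Cpt
  | selfC : Rl → Cpt
  | ival : ℕ → ℤ → ℤ → Cpt           -- ∃f.[l,u]
  deriving DecidableEq

/-- SROIQ(D) axioms: GCIs, role disjointness, complex role inclusions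
    (terminological axioms), and concept/role assertions (ABox axioms). -/
inductive Ax : Type
  | gci : Cpt → Cpt → Ax
  | rdisj : Rl → Rl → Ax
  | rincl : List Rl → Rl → Ax
  | cassert : Cpt → ℕ → Ax
  | rassert : Rl → ℕ → ℕ → Ax
  deriving DecidableEq

/-- An interpretation: concept names, role names, concrete properties,
    individual names. -/
structure Interp : Type 1 where
  Δ : Type
  nonempty : Nonempty Δ
  conc : ℕ → Set Δ
  role : ℕ → Set (Δ × Δ)
  cprop : ℕ → Set (Δ × ℤ)
  ind : ℕ → Δ

def Rl.sem (I : Interp) : Rl → Set (I.Δ × I.Δ)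
  | .name r => I.role r
  | .inv r => {p | (p.2, p.1) ∈ I.role r}

def Cpt.sem (I : Interp) : Cpt → Set I.Δ
  | .atom a => I.conc a
  | .top => Set.univ
  | .bot => ∅
  | .nom a => {I.ind a}
  | .neg c => (c.sem I)ᶜ
  | .and c d => c.sem I ∩ d.sem I
  | .or c d => c.sem I ∪ d.sem I
  | .ex r c => {x | ∃ y, (x, y) ∈ r.sem I ∧ y ∈ c.sem I}
  | .all r c => {x | ∀ y, (x, y) ∈ r.sem I → y ∈ c.sem I}
  | .atLeast n r c => {x | ∃ t : Finset I.Δ, n ≤ t.card ∧ ∀ y ∈ t, (x, y) ∈ r.sem I ∧ y ∈ c.sem I}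
  | .atMost n r c =>
      {x | {y | (x, y) ∈ r.sem I ∧ y ∈ c.sem I}.Finite ∧
           {y | (x, y) ∈ r.sem I ∧ y ∈ c.sem I}.ncard ≤ n}
  | .selfC r => {x | (x, x) ∈ r.sem I}
  | .ival f l u => {x | ∃ i : ℤ, l ≤ i ∧ i ≤ u ∧ (x, i) ∈ I.cprop f}

def chain (I : Interp) : List Rl → Set (I.Δ × I.Δ)
  | [] => {p | p.1 = p.2}
  | r :: rest => {p | ∃ z, (p.1, z) ∈ r.sem I ∧ (z, p.2) ∈ chain I rest}

def Interp.satAx (I : Interp) : Ax → Prop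
  | .gci c d => c.sem I ⊆ d.sem I
  | .rdisj r s => r.sem I ∩ s.sem I = ∅
  | .rincl rs r => chain I rs ⊆ r.sem I
  | .cassert c a => I.ind a ∈ c.sem I
  | .rassert r a b => (I.ind a, I.ind b) ∈ r.sem I

def Interp.sat (I : Interp) (K : Set Ax) : Prop := ∀ ax ∈ K, I.satAx ax

/-- Terminological axioms. -/
def isTerm : Ax → Prop
  | .gci _ _ => True
  | .rdisj _ _ => True
  | .rincl _ _ => True
  | _ => False

/-- The terminological part (TBox) of a knowledge base. -/
def termPart (K : Set Ax) : Set Ax := {ax | ax ∈ K ∧ isTerm ax}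

/-- The ABox of a knowledge base. -/
def abox (K : Set Ax) : Set Ax := {ax | ax ∈ K ∧ ¬ isTerm ax}

/-! ### Signatures -/

def Rl.base : Rl → ℕ
  | .name r => r
  | .inv r => r

def Cpt.cNames : Cpt → Set ℕ
  | .atom a => {a}
  | .neg c => c.cNames
  | .and c d => c.cNames ∪ d.cNames
  | .or c d => c.cNames ∪ d.cNames
  | .ex _ c => c.cNames
  | .all _ c => c.cNames
  | .atLeast _ _ c => c.cNames
  | .atMost _ _ c => c.cNames
  | _ => ∅

def Cpt.rNames : Cpt → Set ℕ
  | .neg c => c.rNames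
  | .and c d => c.rNames ∪ d.rNames
  | .or c d => c.rNames ∪ d.rNames
  | .ex r c => insert r.base c.rNames
  | .all r c => insert r.base c.rNames
  | .atLeast _ r c => insert r.base c.rNames
  | .atMost _ r c => insert r.base c.rNames
  | .selfC r => {r.base}
  | _ => ∅

def Cpt.fNames : Cpt → Set ℕ
  | .neg c => c.fNames
  | .and c d => c.fNames ∪ d.fNames
  | .or c d => c.fNames ∪ d.fNames
  | .ex _ c => c.fNames
  | .all _ c => c.fNames
  | .atLeast _ _ c => c.fNames
  | .atMost _ _ c => c.fNames
  | .ival f _ _ => {f}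
  | _ => ∅

def Cpt.iNames : Cpt → Set ℕ
  | .nom a => {a}
  | .neg c => c.iNames
  | .and c d => c.iNames ∪ d.iNames
  | .or c d => c.iNames ∪ d.iNames
  | .ex _ c => c.iNames
  | .all _ c => c.iNames
  | .atLeast _ _ c => c.iNames
  | .atMost _ _ c => c.iNames
  | _ => ∅

def Ax.cNames : Ax → Set ℕ
  | .gci c d => c.cNames ∪ d.cNames
  | .cassert c _ => c.cNames
  | _ => ∅

def Ax.rNames : Ax → Set ℕ
  | .gci c d => c.rNames ∪ d.rNames
  | .rdisj r s => {r.base, s.base}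
  | .rincl rs r => insert r.base {n | ∃ s ∈ rs, n = Rl.base s}
  | .cassert c _ => c.rNames
  | .rassert r _ _ => {r.base}

def Ax.fNames : Ax → Set ℕ
  | .gci c d => c.fNames ∪ d.fNames
  | .cassert c _ => c.fNames
  | _ => ∅

def Ax.iNames : Ax → Set ℕ
  | .gci c d => c.iNames ∪ d.iNames
  | .cassert c a => insert a c.iNames
  | .rassert _ a b => {a, b}
  | _ => ∅

def sigC (K : Set Ax) : Set ℕ := {n | ∃ ax ∈ K, n ∈ Ax.cNames ax}
def sigR (K : Set Ax) : Set ℕ := {n | ∃ ax ∈ K, n ∈ Ax.rNames ax}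
def sigF (K : Set Ax) : Set ℕ := {n | ∃ ax ∈ K, n ∈ Ax.fNames ax}
def sigI (K : Set Ax) : Set ℕ := {n | ∃ ax ∈ K, n ∈ Ax.iNames ax}

/-! ### Disjoint unions of interpretations -/

/-- The (generalized) disjoint union `⊎^{i₀} (J i)` of a family of interpretations:
    the family is made mutually disjoint by forming the sigma type, and individual
    names are interpreted in the component `i₀`. -/
def sigmaUnion {ι : Type} (J : ι → Interp) (i₀ : ι) : Interp where
  Δ := Σ i, (J i).Δ
  nonempty := ⟨⟨i₀, Classical.choice (J i₀).nonempty⟩⟩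
  conc := fun a => {x | x.2 ∈ (J x.1).conc a}
  role := fun r => {p | ∃ (i : ι) (x y : (J i).Δ),
    p.1 = ⟨i, x⟩ ∧ p.2 = ⟨i, y⟩ ∧ (x, y) ∈ (J i).role r}
  cprop := fun f => {q | (q.1.2, q.2) ∈ (J q.1.1).cprop f}
  ind := fun a => ⟨i₀, (J i₀).ind a⟩

/-- `T` enjoys the disjoint model union property: the (generalized) disjoint union of
    any family of mutually disjoint models of `T` is again a model of `T`. -/
def DMUP (T : Set Ax) : Prop :=
  ∀ (ι : Type) (J : ι → Interp) (i₀ : ι),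
    (∀ i, (J i).sat T) → (sigmaUnion J i₀).sat T

/-! ### Locality, oracle queries -/

/-- The interpretation obtained from `I` by interpreting every concept, role and
    concrete-property name outside the signature `(SgC, SgR, SgF)` as the empty set. -/
def localize (I : Interp) (SgC SgR SgF : Set ℕ) : Interp where
  Δ := I.Δ
  nonempty := I.nonempty
  conc := fun a => {d | a ∈ SgC ∧ d ∈ I.conc a}
  role := fun r => {p | r ∈ SgR ∧ p ∈ I.role r}
  cprop := fun f => {p | f ∈ SgF ∧ p ∈ I.cprop f}
  ind := I.ind

/-- `T` is local w.r.t. a signature: every interpretation of the signature extends to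
    a model of `T` by emptying all concept/role (and concrete-property) names outside it. -/
def LocalWrt (T : Set Ax) (SgC SgR SgF : Set ℕ) : Prop :=
  ∀ I : Interp, (localize I SgC SgR SgF).sat T

/-- An oracle query `A₁ ⊓ … ⊓ A_m ⊑ A_{m+1} ⊔ … ⊔ Aₙ` (rhs `⊥` when empty). -/
structure OQuery : Type where
  lhs : List ℕ
  rhs : List ℕ

def Interp.satQ (I : Interp) (q : OQuery) : Prop :=
  {d | ∀ a ∈ q.lhs, d ∈ I.conc a} ⊆ {d | ∃ b ∈ q.rhs, d ∈ I.conc b}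

/-- `pos(O)`: the queries over the concept names of `sig(O)` entailed by `O`. -/
def pos (O : Set Ax) : Set OQuery :=
  {q | (∀ a ∈ q.lhs, a ∈ sigC O) ∧ (∀ b ∈ q.rhs, b ∈ sigC O) ∧
     ∀ I : Interp, I.sat O → I.satQ q}

/-- `O` is convex w.r.t. the oracle query language `L_O`. -/
def ConvexPos (O : Set Ax) : Prop :=
  ∀ q ∈ pos O, ∃ b ∈ q.rhs, (OQuery.mk q.lhs [b]) ∈ pos O

end SROIQPaper

/-!
Terminological axioms hold in the union by the disjoint model union property. The ABox
only speaks about individuals, which the union interprets inside the component `J i₀`.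
Roles of the union never leave a component, so `Sigma.mk i₀` embeds `J i₀` as a
generated subinterpretation; membership in every concept, number restrictions included
(the embedding is injective), is invariant under such embeddings, so the assertions
holding in `J i₀` hold in the union.
-/

namespace SROIQPaper

theorem coe_le_encard_iff_exists_finset {α : Type*} (P : α → Prop) (n : ℕ) :
    (n : ℕ∞) ≤ {y | P y}.encard ↔ ∃ t : Finset α, n ≤ t.card ∧ ∀ y ∈ t, P y := by
  constructor
  · intro hn
    obtain ⟨t, htS, htn⟩ := Set.exists_subset_encard_eq hn
    have ht : t.Finite := Set.finite_of_encard_eq_coe htn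
    refine ⟨ht.toFinset, ?_, fun y hy => htS (ht.mem_toFinset.mp hy)⟩
    rw [ht.encard_eq_coe_toFinset_card, Nat.cast_inj] at htn
    exact htn.ge
  · rintro ⟨t, hn, htS⟩
    calc (n : ℕ∞) ≤ t.card := Nat.cast_le.mpr hn
      _ = (t : Set α).encard := (Set.encard_coe_eq_coe_finsetCard t).symm
      _ ≤ {y | P y}.encard := Set.encard_le_encard htS

/-- `f` is an isomorphism of `I` onto a generated subinterpretation of `I'`. -/
structure IsGeneratedEmbedding (I I' : Interp) (f : I.Δ → I'.Δ) : Prop where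
  injective : Function.Injective f
  mem_conc_iff : ∀ a x, f x ∈ I'.conc a ↔ x ∈ I.conc a
  mem_cprop_iff : ∀ g x (i : ℤ), (f x, i) ∈ I'.cprop g ↔ (x, i) ∈ I.cprop g
  ind_eq : ∀ a, I'.ind a = f (I.ind a)
  mem_rlSem_iff : ∀ (r : Rl) x z, (f x, z) ∈ r.sem I' ↔ ∃ y, z = f y ∧ (x, y) ∈ r.sem I

namespace IsGeneratedEmbedding

variable {I I' : Interp} {f : I.Δ → I'.Δ}

theorem successors_eq_image (hf : IsGeneratedEmbedding I I' f) {C : Cpt}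
    (hC : ∀ y, f y ∈ C.sem I' ↔ y ∈ C.sem I) (r : Rl) (x : I.Δ) :
    {z | (f x, z) ∈ r.sem I' ∧ z ∈ C.sem I'} = f '' {y | (x, y) ∈ r.sem I ∧ y ∈ C.sem I} := by
  ext z
  simp only [Set.mem_ofPred_eq, Set.mem_image, hf.mem_rlSem_iff]
  constructor
  · rintro ⟨⟨y, rfl, hy⟩, hC'⟩
    exact ⟨y, ⟨hy, (hC y).mp hC'⟩, rfl⟩
  · rintro ⟨y, ⟨hy, hC'⟩, rfl⟩
    exact ⟨⟨y, rfl, hy⟩, (hC y).mpr hC'⟩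

theorem encard_successors (hf : IsGeneratedEmbedding I I' f) {C : Cpt}
    (hC : ∀ y, f y ∈ C.sem I' ↔ y ∈ C.sem I) (r : Rl) (x : I.Δ) :
    {z | (f x, z) ∈ r.sem I' ∧ z ∈ C.sem I'}.encard =
      {y | (x, y) ∈ r.sem I ∧ y ∈ C.sem I}.encard := by
  rw [hf.successors_eq_image hC, hf.injective.injOn.encard_image]

theorem mem_cptSem_iff (hf : IsGeneratedEmbedding I I' f) (C : Cpt) (x : I.Δ) :
    f x ∈ C.sem I' ↔ x ∈ C.sem I := by
  induction C generalizing x with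
  | atom a => exact hf.mem_conc_iff a x
  | top | bot => simp only [Cpt.sem, Set.mem_univ, Set.mem_empty_iff_false]
  | nom a =>
    simp only [Cpt.sem, Set.mem_singleton_iff, hf.ind_eq]
    exact hf.injective.eq_iff
  | neg c ih => exact not_congr (ih x)
  | and c d ihc ihd => exact and_congr (ihc x) (ihd x)
  | or c d ihc ihd => exact or_congr (ihc x) (ihd x)
  | ex r c ih =>
    simp only [Cpt.sem, Set.mem_ofPred_eq, hf.mem_rlSem_iff]
    constructor
    · rintro ⟨_, ⟨y, rfl, hy⟩, hc⟩
      exact ⟨y, hy, (ih y).mp hc⟩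
    · rintro ⟨y, hy, hc⟩
      exact ⟨f y, ⟨y, rfl, hy⟩, (ih y).mpr hc⟩
  | all r c ih =>
    simp only [Cpt.sem, Set.mem_ofPred_eq, hf.mem_rlSem_iff]
    constructor
    · intro h y hy
      exact (ih y).mp (h (f y) ⟨y, rfl, hy⟩)
    · rintro h _ ⟨y, rfl, hy⟩
      exact (ih y).mpr (h y hy)
  | atLeast n r c ih =>
    simp only [Cpt.sem, Set.mem_ofPred_eq, ← coe_le_encard_iff_exists_finset]
    rw [hf.encard_successors ih]
  | atMost n r c ih =>
    simp only [Cpt.sem, Set.mem_ofPred_eq, ← Set.encard_le_coe_iff_finite_ncard_le]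
    rw [hf.encard_successors ih]
  | selfC r =>
    simp only [Cpt.sem, Set.mem_ofPred_eq, hf.mem_rlSem_iff, hf.injective.eq_iff]
    exact ⟨fun ⟨_, rfl, h⟩ => h, fun h => ⟨x, rfl, h⟩⟩
  | ival g l u =>
    simp only [Cpt.sem, Set.mem_ofPred_eq, hf.mem_cprop_iff]

theorem satAx_iff_of_not_isTerm (hf : IsGeneratedEmbedding I I' f) {ax : Ax}
    (hax : ¬ isTerm ax) : I'.satAx ax ↔ I.satAx ax := by
  cases ax with
  | gci | rdisj | rincl => exact absurd trivial hax
  | cassert c a => simp only [Interp.satAx, hf.ind_eq, hf.mem_cptSem_iff]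
  | rassert r a b =>
    simp only [Interp.satAx, hf.ind_eq, hf.mem_rlSem_iff, hf.injective.eq_iff, exists_eq_left']

end IsGeneratedEmbedding

theorem isGeneratedEmbedding_sigmaMk {ι : Type} (J : ι → Interp) (i₀ : ι) :
    IsGeneratedEmbedding (J i₀) (sigmaUnion J i₀) (Sigma.mk (β := fun i => (J i).Δ) i₀) where
  injective := sigma_mk_injective
  mem_conc_iff _ _ := Iff.rfl
  mem_cprop_iff _ _ _ := Iff.rfl
  ind_eq _ := rfl
  mem_rlSem_iff r x z := by
    cases r with
    | name n =>
      constructor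
      · rintro ⟨i, a, b, hx, rfl, hab⟩
        obtain ⟨rfl, ha⟩ := Sigma.mk.inj_iff.mp hx
        cases ha
        exact ⟨b, rfl, hab⟩
      · rintro ⟨y, rfl, hy⟩
        exact ⟨i₀, x, y, rfl, rfl, hy⟩
    | inv n =>
      constructor
      · rintro ⟨i, a, b, rfl, hx, hab⟩
        obtain ⟨rfl, hb⟩ := Sigma.mk.inj_iff.mp hx
        cases hb
        exact ⟨a, rfl, hab⟩
      · rintro ⟨y, rfl, hy⟩
        exact ⟨i₀, y, x, rfl, rfl, hy⟩

theorem statement_0_general (K : Set Ax)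
    (hDMUP : DMUP (termPart K))
    {ι : Type} (J : ι → Interp) (i₀ : ι)
    (hmod : ∀ i, (J i).sat K) :
    (sigmaUnion J i₀).sat K := by
  intro ax hax
  by_cases hterm : isTerm ax
  · exact hDMUP ι J i₀ (fun i ax' hax' => hmod i ax' hax'.1) ax ⟨hax, hterm⟩
  · exact ((isGeneratedEmbedding_sigmaMk J i₀).satAx_iff_of_not_isTerm hterm).mpr
      (hmod i₀ ax hax)

/-- let `K = T ∪ A` be a knowledge base whose terminological part `T`
    enjoys the disjoint model union property (whence `sig(T)` contains no individual
    names) and whose ABox is `A`. Then for every family of mutually disjoint models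
    of `K` and every member `i₀` of the family, the generalized disjoint union
    `⊎^{i₀}` of the family is a model of `K`. -/
theorem statement_0 (K : Set Ax) (hK : K.Finite)
    (hNoInd : ∀ ax ∈ termPart K, Ax.iNames ax = ∅)
    (hDMUP : DMUP (termPart K))
    {ι : Type} (J : ι → Interp) (i₀ : ι)
    (hmod : ∀ i, (J i).sat K) :
    (sigmaUnion J i₀).sat K :=
  statement_0_general K hDMUP J i₀ hmod

end SROIQPaper
end

section
/- Let S be a set of propositional 3-clauses c_i = L_{i1} ∨ L_{i2} ∨ L_{i3} (1 ≤ i ≤ n) over propositional variables p₁,…,p_m, used as concrete-property names. Let C = ∃p₁.[0,1] ⊓ … ⊓ ∃p_m.[0,1] and D = ⊔_{i=1}^n (L̃_{i1} ⊓ L̃_{i2} ⊓ L̃_{i3}), where L̃_{ij} = ∃p_k.[0,0] if L_{ij} = p_k and L̃_{ij} = ∃p_k.[1,1] if L_{ij} = ¬p_k. Then S is propositionally satisfiable if and only if the subsumption C ⊑ D is not valid (i.e., is not entailed by the empty knowledge base). -/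
/-! Core formalization of the policy logic `PL` of Bonatti et al.,
    "Machine Understandable Policies and GDPR Compliance Checking". -/

namespace PLPaper

/-- Simple `PL` concepts: `C ::= A | ⊥ | ∃f.[l,u] | ∃R.C | C ⊓ C`. -/
inductive SPL : Type
  | atom  : ℕ → SPL
  | bot   : SPL
  | ival  : ℕ → ℤ → ℤ → SPL
  | ex    : ℕ → SPL → SPL
  | inter : SPL → SPL → SPL
  deriving DecidableEq

/-- A full `PL` concept: a union `C₁ ⊔ … ⊔ Cₙ` of simple concepts, given as a list. -/
abbrev PLC := List SPL

/-- Axioms of a `PL` knowledge base. -/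
inductive PLAx : Type
  | funcRole : ℕ → PLAx              -- func(R), R a role name
  | funcProp : ℕ → PLAx              -- func(f), f a concrete property
  | rangeAx  : ℕ → ℕ → PLAx          -- range(R, A)
  | incl     : ℕ → ℕ → PLAx          -- A ⊑ B
  | disj     : ℕ → ℕ → PLAx          -- disj(A, B)
  deriving DecidableEq

/-- A description-logic interpretation (concept names, role names, concrete properties). -/
structure Interp : Type 1 where
  Δ : Type
  nonempty : Nonempty Δ
  conc : ℕ → Set Δ
  role : ℕ → Set (Δ × Δ)
  cprop : ℕ → Set (Δ × ℤ)

/-- Semantics of simple `PL` concepts. -/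
def SPL.sem (I : Interp) : SPL → Set I.Δ
  | .atom a => I.conc a
  | .bot => ∅
  | .ival f l u => {d | ∃ i : ℤ, l ≤ i ∧ i ≤ u ∧ (d, i) ∈ I.cprop f}
  | .ex r c => {d | ∃ e, (d, e) ∈ I.role r ∧ e ∈ c.sem I}
  | .inter c d => c.sem I ∩ d.sem I

/-- Semantics of full `PL` concepts (finite unions). -/
def semL (I : Interp) (C : PLC) : Set I.Δ := {d | ∃ c ∈ C, d ∈ c.sem I}

/-- Satisfaction of a `PL` axiom. -/
def Interp.satAx (I : Interp) : PLAx → Prop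
  | .funcRole r => ∀ ⦃d e e'⦄, (d, e) ∈ I.role r → (d, e') ∈ I.role r → e = e'
  | .funcProp f => ∀ ⦃d i j⦄, (d, i) ∈ I.cprop f → (d, j) ∈ I.cprop f → i = j
  | .rangeAx r a => ∀ ⦃d e⦄, (d, e) ∈ I.role r → e ∈ I.conc a
  | .incl a b => I.conc a ⊆ I.conc b
  | .disj a b => I.conc a ∩ I.conc b = ∅

def Interp.satKB (I : Interp) (K : Set PLAx) : Prop := ∀ ax ∈ K, I.satAx ax

/-- `K ⊨ C ⊑ D` for full `PL` concepts. -/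
def Entails (K : Set PLAx) (C D : PLC) : Prop :=
  ∀ I : Interp, I.satKB K → semL I C ⊆ semL I D

/-- The multiset of conjuncts of a simple concept (intersections treated as sets:
    ordering and parenthesization of conjuncts is irrelevant). -/
def SPL.conj : SPL → Multiset SPL
  | .inter c d => c.conj + d.conj
  | c => {c}

/-- `⊑*`: the reflexive–transitive closure of the atomic inclusions of `K`. -/
def SubStar (K : Set PLAx) : ℕ → ℕ → Prop :=
  Relation.ReflTransGen fun a b => PLAx.incl a b ∈ K

/-- One application of one of the seven normalization rules w.r.t. `K` (Table 3);
    intersections are treated as sets of conjuncts, and rules may be applied to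
    subconcepts (congruence). -/
inductive Rw (K : Set PLAx) : SPL → SPL → Prop
  /-- rule 1: `⊥ ⊓ D ⇝ ⊥` -/
  | botConj (C : SPL) :
      SPL.bot ∈ C.conj → C ≠ SPL.bot → Rw K C SPL.bot
  /-- rule 2: `∃R.⊥ ⇝ ⊥` -/
  | exBot (r : ℕ) : Rw K (SPL.ex r SPL.bot) SPL.bot
  /-- rule 3: `∃f.[l,u] ⇝ ⊥` if `l > u` -/
  | emptyIval (f : ℕ) (l u : ℤ) : u < l → Rw K (SPL.ival f l u) SPL.bot
  /-- rule 4: merge existential restrictions over a functional role -/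
  | funcRole (C C' : SPL) (r : ℕ) (D D' : SPL) (rest : Multiset SPL) :
      PLAx.funcRole r ∈ K →
      C.conj = {SPL.ex r D, SPL.ex r D'} + rest →
      C'.conj = {SPL.ex r (SPL.inter D D')} + rest →
      Rw K C C'
  /-- rule 5: merge interval constraints over a functional concrete property -/
  | funcProp (C C' : SPL) (f : ℕ) (l₁ u₁ l₂ u₂ : ℤ) (rest : Multiset SPL) :
      PLAx.funcProp f ∈ K →
      C.conj = {SPL.ival f l₁ u₁, SPL.ival f l₂ u₂} + rest →
      C'.conj = {SPL.ival f (max l₁ l₂) (min u₁ u₂)} + rest →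
      Rw K C C'
  /-- rule 6: add range information -/
  | rangeRule (C C' : SPL) (r a : ℕ) (D : SPL) (rest : Multiset SPL) :
      PLAx.rangeAx r a ∈ K →
      SPL.atom a ∉ D.conj → SPL.bot ∉ D.conj →
      C.conj = {SPL.ex r D} + rest →
      C'.conj = {SPL.ex r (SPL.inter D (SPL.atom a))} + rest →
      Rw K C C'
  /-- rule 7: disjointness clash -/
  | disjRule (C : SPL) (a₁ a₂ b₁ b₂ : ℕ) :
      SPL.atom a₁ ∈ C.conj → SPL.atom a₂ ∈ C.conj →
      SubStar K a₁ b₁ → SubStar K a₂ b₂ →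
      PLAx.disj b₁ b₂ ∈ K →
      Rw K C SPL.bot
  /-- rules may be applied inside existential restrictions -/
  | exCongr (r : ℕ) (c c' : SPL) : Rw K c c' → Rw K (SPL.ex r c) (SPL.ex r c')
  /-- rules may be applied to one conjunct of an intersection -/
  | interCongr (C C' c c' : SPL) (rest : Multiset SPL) :
      Rw K c c' →
      C.conj = {c} + rest → C'.conj = {c'} + rest →
      Rw K C C'

/-- A simple concept is normalized w.r.t. `K` when no rule is applicable. -/
def Normalized (K : Set PLAx) (C : SPL) : Prop := ¬ ∃ C', Rw K C C'

/-- All interval constraints `∃f.[l,u]` occurring (at any depth) in a simple concept. -/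
def SPL.ivalsOf : SPL → List (ℕ × ℤ × ℤ)
  | .ival f l u => [(f, l, u)]
  | .ex _ c => c.ivalsOf
  | .inter c d => c.ivalsOf ++ d.ivalsOf
  | _ => []

def ivalsL (C : PLC) : List (ℕ × ℤ × ℤ) := C.flatMap SPL.ivalsOf

/-- The integers occurring as interval endpoints in a full concept. -/
def endpointsL (D : PLC) : List ℤ := (ivalsL D).flatMap fun t => [t.2.1, t.2.2]

/-- A subsumption `C ⊑ D` is interval safe iff every interval of `C` is either
    contained in, or disjoint from, every interval of `D`. -/
def IntervalSafe (C D : PLC) : Prop :=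
  ∀ p ∈ ivalsL C, ∀ q ∈ ivalsL D,
    Set.Icc p.2.1 p.2.2 ⊆ Set.Icc q.2.1 q.2.2 ∨
      Set.Icc p.2.1 p.2.2 ∩ Set.Icc q.2.1 q.2.2 = ∅

/-- Given the ascending chain `x₀ < x₁ < … < x_{r+1}` of cut points, produce the
    subinterval constraints `[xᵢ,xᵢ]`, `[xᵢ+1, xᵢ₊₁-1]`, …, `[x_{r+1},x_{r+1}]`. -/
def chainPieces (f : ℕ) : List ℤ → List SPL
  | [] => []
  | [x] => [SPL.ival f x x]
  | x :: y :: rest =>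
      SPL.ival f x x :: SPL.ival f (x + 1) (y - 1) :: chainPieces f (y :: rest)

/-- The endpoints of `D` lying in `[l,u]`, sorted in increasing order, without duplicates. -/
def cutPoints (E : List ℤ) (l u : ℤ) : List ℤ :=
  ((E.filter fun x => decide (l ≤ x ∧ x ≤ u)).toFinset).sort (· ≤ ·)

/-- Interval splitting of a single constraint `∃f.[l,u]` w.r.t. the endpoints `E`. -/
def splitIval (E : List ℤ) (f : ℕ) (l u : ℤ) : List SPL :=
  chainPieces f (l :: (cutPoints E l u ++ [u]))

/-- Interval normalization of a simple concept w.r.t. endpoints `E`: replace each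
    interval constraint by the union of its pieces and lift unions to the top level
    (distributivity of `⊓` over `⊔` and `∃R.(C₁ ⊔ C₂) ≡ ∃R.C₁ ⊔ ∃R.C₂`). -/
def SPL.splitC (E : List ℤ) : SPL → List SPL
  | .atom a => [.atom a]
  | .bot => [.bot]
  | .ival f l u => splitIval E f l u
  | .ex r c => (c.splitC E).map (SPL.ex r)
  | .inter c d => (c.splitC E).flatMap fun c' => (d.splitC E).map fun d' => SPL.inter c' d'

/-- `split(C, D)` for full `PL` concepts. -/
def splitL (C D : PLC) : PLC := C.flatMap (SPL.splitC (endpointsL D))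

/-- Size of (the encoding of) a simple concept. -/
def SPL.size : SPL → ℕ
  | .atom _ => 1
  | .bot => 1
  | .ival _ _ _ => 1
  | .ex _ c => c.size + 1
  | .inter c d => c.size + d.size + 1

/-- Size of a full concept. -/
def sizeL (C : PLC) : ℕ := (C.map SPL.size).sum + 1

/-- The structural subsumption algorithm `STS` (Algorithm 1): `STS K C D` holds
    iff the algorithm returns `true` on the elementary subsumption `C ⊑ D`. -/
inductive STS (K : Set PLAx) : SPL → SPL → Prop
  | botCase (D : SPL) : STS K SPL.bot D
  | atomCase (C : SPL) (a a' : ℕ) :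
      SPL.atom a' ∈ C.conj → SubStar K a' a → STS K C (SPL.atom a)
  | ivalCase (C : SPL) (f : ℕ) (l u l' u' : ℤ) :
      SPL.ival f l' u' ∈ C.conj → l ≤ l' → u' ≤ u → STS K C (SPL.ival f l u)
  | exCase (C C' D' : SPL) (r : ℕ) :
      SPL.ex r C' ∈ C.conj → STS K C' D' → STS K C (SPL.ex r D')
  | interCase (C D' D'' : SPL) :
      STS K C D' → STS K C D'' → STS K C (SPL.inter D' D'')

/-- Pointwise exhaustive normalization of the disjuncts of a full concept. -/
def RwL (K : Set PLAx) (C C' : PLC) : Prop :=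
  List.Forall₂ (Relation.ReflTransGen (Rw K)) C C'

/-- `PLR(K, C ⊑ D) = true` (Algorithm 2): normalize `C` exhaustively with the seven
    rules, split intervals w.r.t. `D`, and check every resulting disjunct against
    some disjunct of `D` with `STS`. -/
def PLRaccept (K : Set PLAx) (C D : PLC) : Prop :=
  ∃ C' : PLC, RwL K C C' ∧ (∀ c ∈ C', Normalized K c) ∧
    ∀ c ∈ splitL C' D, ∃ d ∈ D, STS K c d

/-! ### Signatures -/

def SPL.rNames : SPL → Set ℕ
  | .ex r c => insert r c.rNames
  | .inter c d => c.rNames ∪ d.rNames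
  | _ => ∅

def SPL.cNames : SPL → Set ℕ
  | .atom a => {a}
  | .ex _ c => c.cNames
  | .inter c d => c.cNames ∪ d.cNames
  | _ => ∅

def rNamesL (C : PLC) : Set ℕ := {n | ∃ c ∈ C, n ∈ SPL.rNames c}
def cNamesL (C : PLC) : Set ℕ := {n | ∃ c ∈ C, n ∈ SPL.cNames c}

def PLAx.rNames : PLAx → Set ℕ
  | .funcRole r => {r}
  | .rangeAx r _ => {r}
  | _ => ∅

def PLAx.cNames : PLAx → Set ℕ
  | .rangeAx _ a => {a}
  | .incl a b => {a, b}
  | .disj a b => {a, b}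
  | _ => ∅

def rNamesPL (K : Set PLAx) : Set ℕ := {n | ∃ ax ∈ K, n ∈ PLAx.rNames ax}
def cNamesPL (K : Set PLAx) : Set ℕ := {n | ∃ ax ∈ K, n ∈ PLAx.cNames ax}

/-! ### Horn-SRIQ oracles -/

/-- SRIQ roles: role names and their inverses. -/
inductive HRole : Type
  | name : ℕ → HRole
  | inv  : ℕ → HRole
  deriving DecidableEq

/-- The concepts allowed in normal-form Horn-SRIQ axioms:
    concept names, `⊤`, `⊥`, and `∃S.Self`. -/
inductive HAtom : Type
  | name : ℕ → HAtom
  | top  : HAtom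
  | bot  : HAtom
  | self : HRole → HAtom
  deriving DecidableEq

/-- Horn-SRIQ axioms in normal form (Table 2), plus role axioms. -/
inductive HAx : Type
  | sub2    : HAtom → HAtom → HAtom → HAx      -- C₁ ⊓ C₂ ⊑ D
  | subEx   : HRole → HAtom → HAtom → HAx      -- ∃R.C ⊑ D
  | subAll  : HAtom → HRole → HAtom → HAx      -- C ⊑ ∀R.D
  | subToEx : HAtom → HRole → HAtom → HAx      -- C ⊑ ∃R.D
  | atMost1 : HAtom → HRole → HAtom → HAx      -- C ⊑ ≤1 S.D
  | atLeast : HAtom → ℕ → HRole → HAtom → HAx  -- C ⊑ ≥n S.D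
  | rIncl   : List HRole → HRole → HAx         -- R₁ ∘ … ∘ Rₙ ⊑ R
  | rDisj   : HRole → HRole → HAx              -- disj(S₁, S₂)

def HRole.sem (I : Interp) : HRole → Set (I.Δ × I.Δ)
  | .name r => I.role r
  | .inv r => {p | (p.2, p.1) ∈ I.role r}

def HAtom.sem (I : Interp) : HAtom → Set I.Δ
  | .name a => I.conc a
  | .top => Set.univ
  | .bot => ∅
  | .self s => {d | (d, d) ∈ s.sem I}

def HRole.semChain (I : Interp) : List HRole → Set (I.Δ × I.Δ)
  | [] => {p | p.1 = p.2}
  | r :: rest => {p | ∃ z, (p.1, z) ∈ r.sem I ∧ (z, p.2) ∈ HRole.semChain I rest}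

def Interp.satHAx (I : Interp) : HAx → Prop
  | .sub2 c₁ c₂ d => c₁.sem I ∩ c₂.sem I ⊆ d.sem I
  | .subEx r c d => {x | ∃ y, (x, y) ∈ r.sem I ∧ y ∈ c.sem I} ⊆ d.sem I
  | .subAll c r d => ∀ ⦃x y⦄, x ∈ c.sem I → (x, y) ∈ r.sem I → y ∈ d.sem I
  | .subToEx c r d => ∀ ⦃x⦄, x ∈ c.sem I → ∃ y, (x, y) ∈ r.sem I ∧ y ∈ d.sem I
  | .atMost1 c s d => ∀ ⦃x y z⦄, x ∈ c.sem I → (x, y) ∈ s.sem I → y ∈ d.sem I →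
      (x, z) ∈ s.sem I → z ∈ d.sem I → y = z
  | .atLeast c n s d => ∀ ⦃x⦄, x ∈ c.sem I →
      ∃ t : Finset I.Δ, n ≤ t.card ∧ ∀ y ∈ t, (x, y) ∈ s.sem I ∧ y ∈ d.sem I
  | .rIncl rs r => HRole.semChain I rs ⊆ r.sem I
  | .rDisj s₁ s₂ => s₁.sem I ∩ s₂.sem I = ∅

def Interp.satHKB (I : Interp) (O : Set HAx) : Prop := ∀ ax ∈ O, I.satHAx ax

def HRole.base : HRole → ℕ
  | .name r => r
  | .inv r => r

def HAtom.cNames : HAtom → Set ℕ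
  | .name a => {a}
  | _ => ∅

def HAtom.rNames : HAtom → Set ℕ
  | .self s => {s.base}
  | _ => ∅

def HAx.cNames : HAx → Set ℕ
  | .sub2 c₁ c₂ d => c₁.cNames ∪ c₂.cNames ∪ d.cNames
  | .subEx _ c d => c.cNames ∪ d.cNames
  | .subAll c _ d => c.cNames ∪ d.cNames
  | .subToEx c _ d => c.cNames ∪ d.cNames
  | .atMost1 c _ d => c.cNames ∪ d.cNames
  | .atLeast c _ _ d => c.cNames ∪ d.cNames
  | .rIncl _ _ => ∅
  | .rDisj _ _ => ∅

def HAx.rNames : HAx → Set ℕ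
  | .sub2 c₁ c₂ d => c₁.rNames ∪ c₂.rNames ∪ d.rNames
  | .subEx r c d => insert r.base (c.rNames ∪ d.rNames)
  | .subAll c r d => insert r.base (c.rNames ∪ d.rNames)
  | .subToEx c r d => insert r.base (c.rNames ∪ d.rNames)
  | .atMost1 c s d => insert s.base (c.rNames ∪ d.rNames)
  | .atLeast c _ s d => insert s.base (c.rNames ∪ d.rNames)
  | .rIncl rs r => insert r.base {n | ∃ s ∈ rs, n = HRole.base s}
  | .rDisj s₁ s₂ => {s₁.base, s₂.base}

def rNamesH (O : Set HAx) : Set ℕ := {n | ∃ ax ∈ O, n ∈ HAx.rNames ax}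
def cNamesH (O : Set HAx) : Set ℕ := {n | ∃ ax ∈ O, n ∈ HAx.cNames ax}

/-! ### Axiom shifting, oracle queries, `pos(O_K⁺)` -/

/-- Range and functionality axioms. -/
def isRF : PLAx → Prop
  | .funcRole _ => True
  | .funcProp _ => True
  | .rangeAx _ _ => True
  | _ => False

/-- `K_O⁻`: the range and functionality axioms of `K`. -/
def Kminus (K : Set PLAx) : Set PLAx := {ax | ax ∈ K ∧ isRF ax}

/-- `K \ K_O⁻`: the inclusion and disjointness axioms of `K`, shifted to the oracle. -/
def Kshift (K : Set PLAx) : Set PLAx := {ax | ax ∈ K ∧ ¬ isRF ax}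

/-- Satisfaction of `O_K⁺ = O ∪ (K \ K_O⁻)`. -/
def satOplus (I : Interp) (K : Set PLAx) (O : Set HAx) : Prop :=
  I.satHKB O ∧ I.satKB (Kshift K)

/-- An oracle query `A₁ ⊓ … ⊓ A_m ⊑ A_{m+1} ⊔ … ⊔ Aₙ` (right-hand side `⊥` when empty). -/
structure OQuery : Type where
  lhs : List ℕ
  rhs : List ℕ

def Interp.satQ (I : Interp) (q : OQuery) : Prop :=
  {d | ∀ a ∈ q.lhs, d ∈ I.conc a} ⊆ {d | ∃ b ∈ q.rhs, d ∈ I.conc b}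

/-- The concept names of `sig(O_K⁺)`. -/
def cNamesOplus (K : Set PLAx) (O : Set HAx) : Set ℕ :=
  cNamesH O ∪ cNamesPL (Kshift K)

/-- `pos(O_K⁺)`: the oracle queries over `sig(O_K⁺) ∩ N_C` entailed by `O_K⁺`. -/
def posOplus (K : Set PLAx) (O : Set HAx) : Set OQuery :=
  {q | (∀ a ∈ q.lhs, a ∈ cNamesOplus K O) ∧ (∀ b ∈ q.rhs, b ∈ cNamesOplus K O) ∧
     ∀ I : Interp, satOplus I K O → I.satQ q}

/-- `K ∪ O ⊨ C ⊑ D`. -/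
def EntailsKO (K : Set PLAx) (O : Set HAx) (C D : PLC) : Prop :=
  ∀ I : Interp, I.satKB K → I.satHKB O → semL I C ⊆ semL I D

/-- `K_O⁻ ∪ pos(O_K⁺) ⊨ C ⊑ D`. -/
def EntailsShift (K : Set PLAx) (O : Set HAx) (C D : PLC) : Prop :=
  ∀ I : Interp, I.satKB (Kminus K) → (∀ q ∈ posOplus K O, I.satQ q) →
    semL I C ⊆ semL I D

/-- `O_K⁺ ⊨ A₁ ⊓ … ⊓ Aₙ ⊑ ⊥`. -/
def OplusRefutes (K : Set PLAx) (O : Set HAx) (as : List ℕ) : Prop :=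
  ∀ I : Interp, satOplus I K O → ∀ d : I.Δ, ¬ ∀ a ∈ as, d ∈ I.conc a

/-- One application of one of the seven oracle normalization rules (Table 4). -/
inductive RwO (K : Set PLAx) (O : Set HAx) : SPL → SPL → Prop
  /-- rule 1: `⊥ ⊓ D ⇝ ⊥` -/
  | botConj (C : SPL) :
      SPL.bot ∈ C.conj → C ≠ SPL.bot → RwO K O C SPL.bot
  /-- rule 2 -/
  | exBot (r : ℕ) : RwO K O (SPL.ex r SPL.bot) SPL.bot
  /-- rule 3 -/
  | emptyIval (f : ℕ) (l u : ℤ) : u < l → RwO K O (SPL.ival f l u) SPL.bot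
  /-- rule 4 -/
  | funcRole (C C' : SPL) (r : ℕ) (D D' : SPL) (rest : Multiset SPL) :
      PLAx.funcRole r ∈ Kminus K →
      C.conj = {SPL.ex r D, SPL.ex r D'} + rest →
      C'.conj = {SPL.ex r (SPL.inter D D')} + rest →
      RwO K O C C'
  /-- rule 5 (unconditional) -/
  | funcProp (C C' : SPL) (f : ℕ) (l₁ u₁ l₂ u₂ : ℤ) (rest : Multiset SPL) :
      C.conj = {SPL.ival f l₁ u₁, SPL.ival f l₂ u₂} + rest →
      C'.conj = {SPL.ival f (max l₁ l₂) (min u₁ u₂)} + rest →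
      RwO K O C C'
  /-- rule 6 -/
  | rangeRule (C C' : SPL) (r a : ℕ) (D : SPL) (rest : Multiset SPL) :
      PLAx.rangeAx r a ∈ Kminus K →
      SPL.atom a ∉ D.conj → SPL.bot ∉ D.conj →
      C.conj = {SPL.ex r D} + rest →
      C'.conj = {SPL.ex r (SPL.inter D (SPL.atom a))} + rest →
      RwO K O C C'
  /-- rule 7: `A₁ ⊓ … ⊓ Aₙ ⊓ D ⇝ ⊥` if `O_K⁺ ⊨ A₁ ⊓ … ⊓ Aₙ ⊑ ⊥` -/
  | atomsBot (C : SPL) (as : List ℕ) :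
      as ≠ [] → (∀ a ∈ as, SPL.atom a ∈ C.conj) → OplusRefutes K O as →
      RwO K O C SPL.bot
  /-- congruence: inside existential restrictions -/
  | exCongr (r : ℕ) (c c' : SPL) : RwO K O c c' → RwO K O (SPL.ex r c) (SPL.ex r c')
  /-- congruence: on one conjunct -/
  | interCongr (C C' c c' : SPL) (rest : Multiset SPL) :
      RwO K O c c' →
      C.conj = {c} + rest → C'.conj = {c'} + rest →
      RwO K O C C'

/-- `C` is normalized w.r.t. `K` and `O`. -/
def NormalizedO (K : Set PLAx) (O : Set HAx) (C : SPL) : Prop := ¬ ∃ C', RwO K O C C'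

/-! ### The canonical model of a normalized simple concept -/

/-- The top-level existential restrictions of a simple concept, in syntactic order. -/
def SPL.exList : SPL → List (ℕ × SPL)
  | .ex r c => [(r, c)]
  | .inter c d => c.exList ++ d.exList
  | _ => []

/-- The top-level concept names of a simple concept. -/
def SPL.atomList : SPL → List ℕ
  | .atom a => [a]
  | .inter c d => c.atomList ++ d.atomList
  | _ => []

/-- The top-level interval constraints of a simple concept. -/
def SPL.ivalList : SPL → List (ℕ × ℤ × ℤ)
  | .ival f l u => [(f, l, u)]
  | .inter c d => c.ivalList ++ d.ivalList
  | _ => []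

/-- The subconcept of `C` reached by following a path of indices into the
    nested top-level existential restrictions. -/
def subAt : List ℕ → SPL → Option SPL
  | [], C => some C
  | i :: p, C =>
    match C.exList[i]? with
    | some rc => subAt p rc.2
    | none => none

/-- The canonical model of a simple concept `C` w.r.t. `K` and `O` (Definition 18):
    its domain is the tree of nested existential restrictions of `C`. -/
def canonInterp (K : Set PLAx) (O : Set HAx) (C : SPL) : Interp where
  Δ := {p : List ℕ // (subAt p C).isSome}
  nonempty := ⟨⟨[], by simp [subAt]⟩⟩
  conc := fun a => {p | ∃ C', subAt p.1 C = some C' ∧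
    (OQuery.mk C'.atomList [a]) ∈ posOplus K O}
  role := fun r => {pq | ∃ (C' : SPL) (i : ℕ) (rc : ℕ × SPL),
    subAt pq.1.1 C = some C' ∧ C'.exList[i]? = some rc ∧ rc.1 = r ∧
    pq.2.1 = pq.1.1 ++ [i]}
  cprop := fun f => {pi | ∃ (C' : SPL) (l : ℤ),
    subAt pi.1.1 C = some C' ∧ (f, l, pi.2) ∈ C'.ivalList}

/-- The distinguished point `d` of the canonical model. -/
def canonRoot (K : Set PLAx) (O : Set HAx) (C : SPL) : (canonInterp K O C).Δ :=
  ⟨[], by simp [subAt]⟩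

/-! ### The oracle structural subsumption algorithm and `PLR^O` -/

/-- `STS^O` (Algorithm 3), with the oracle `O_K⁺`. -/
inductive STSO (K : Set PLAx) (O : Set HAx) : SPL → SPL → Prop
  | botCase (D : SPL) : STSO K O SPL.bot D
  | atomCase (C : SPL) (a : ℕ) :
      (OQuery.mk C.atomList [a]) ∈ posOplus K O → STSO K O C (SPL.atom a)
  | ivalCase (C : SPL) (f : ℕ) (l u l' u' : ℤ) :
      SPL.ival f l' u' ∈ C.conj → l ≤ l' → u' ≤ u → STSO K O C (SPL.ival f l u)
  | exCase (C C' D' : SPL) (r : ℕ) :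
      SPL.ex r C' ∈ C.conj → STSO K O C' D' → STSO K O C (SPL.ex r D')
  | interCase (C D' D'' : SPL) :
      STSO K O C D' → STSO K O C D'' → STSO K O C (SPL.inter D' D'')

def RwOL (K : Set PLAx) (O : Set HAx) (C C' : PLC) : Prop :=
  List.Forall₂ (Relation.ReflTransGen (RwO K O)) C C'

/-- `PLR^O(K, C ⊑ D) = true` (Algorithm 4). -/
def PLROaccept (K : Set PLAx) (O : Set HAx) (C D : PLC) : Prop :=
  ∃ C' : PLC, RwOL K O C C' ∧ (∀ c ∈ C', NormalizedO K O c) ∧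
    ∀ c ∈ splitL C' D, ∃ d ∈ D, STSO K O c d

/-! ### Single-atom form and oracle compilation -/

/-- Auxiliary predicate: every conjunct is a concept name, an interval constraint,
    or an existential restriction whose filler is in single-atom form. -/
def SAaux : SPL → Prop
  | .atom _ => True
  | .bot => False
  | .ival _ _ _ => True
  | .ex _ c => SAaux c ∧ c.atomList.length ≤ 1
  | .inter c d => SAaux c ∧ SAaux d

/-- A simple concept in single-atom form. -/
def SingleAtomS (C : SPL) : Prop := SAaux C ∧ C.atomList.length ≤ 1

/-- A full concept in single-atom form. -/
def SingleAtomL (C : PLC) : Prop := ∀ c ∈ C, SingleAtomS c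

/-- `comp(K, O) = K_O⁻ ∪ { A ⊑ B : (A ⊑ B) ∈ pos(O_K⁺) }`. -/
def compKB (K : Set PLAx) (O : Set HAx) : Set PLAx :=
  Kminus K ∪ {ax | ∃ a b : ℕ, ax = PLAx.incl a b ∧ (OQuery.mk [a] [b]) ∈ posOplus K O}

/-- A definition `B ≡ A₁ ⊓ … ⊓ Aₙ` (expressible in both EL and DL-lite_horn). -/
abbrev CDef := ℕ × List ℕ

def Interp.satDef (I : Interp) (df : CDef) : Prop :=
  I.conc df.1 = {d | ∀ a ∈ df.2, d ∈ I.conc a}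

/-- `K ∪ O ∪ O* ⊨ C ⊑ D`, where `O*` is a list of definitions. -/
def EntailsKODefs (K : Set PLAx) (O : Set HAx) (defs : List CDef) (C D : PLC) : Prop :=
  ∀ I : Interp, I.satKB K → I.satHKB O → (∀ df ∈ defs, I.satDef df) →
    semL I C ⊆ semL I D

def defsSize (defs : List CDef) : ℕ := (defs.map fun p => p.2.length + 1).sum

end PLPaper

namespace PLPaper

/-- A propositional literal: a variable together with its polarity. -/
abbrev Lit := ℕ × Bool
/-- A propositional 3-clause `L₁ ∨ L₂ ∨ L₃`. -/
abbrev Clause := Lit × Lit × Lit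

def litSat (σ : ℕ → Bool) (L : Lit) : Prop := σ L.1 = L.2

/-- Propositional satisfiability of a set of 3-clauses. -/
def Sat3 (S : List Clause) : Prop :=
  ∃ σ : ℕ → Bool, ∀ cl ∈ S, litSat σ cl.1 ∨ litSat σ cl.2.1 ∨ litSat σ cl.2.2

/-- `L̃`: the encoding of the complement of a literal
    (`∃p_k.[0,0]` if `L = p_k`, and `∃p_k.[1,1]` if `L = ¬p_k`). -/
def encLit : Lit → SPL
  | (k, true) => SPL.ival k 0 0
  | (k, false) => SPL.ival k 1 1

def bigInter : List SPL → SPL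
  | [] => SPL.bot
  | [c] => c
  | c :: rest => SPL.inter c (bigInter rest)

/-! A point `d ∈ C` assigns to each `p_k`, `k < m`, a value `0` or `1`, i.e. a truth
assignment, and `L̃` is exactly the constraint that `d` gives `L` the value refuting it.
Hence `d ∈ C \ D` means precisely that this assignment satisfies every clause. Conversely,
a satisfying assignment `σ` yields the one-point counter-model in which `p_k` takes the
value `σ(p_k)`. -/

section Semantics

variable {I : Interp} {d : I.Δ}

lemma mem_semL_singleton {c : SPL} : d ∈ semL I [c] ↔ d ∈ c.sem I := by
  simp [semL]

lemma mem_semL_map {α : Type*} {f : α → SPL} {xs : List α} :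
    d ∈ semL I (xs.map f) ↔ ∃ x ∈ xs, d ∈ (f x).sem I := by
  simp [semL]

lemma mem_sem_bigInter {cs : List SPL} (hcs : cs ≠ []) :
    d ∈ (bigInter cs).sem I ↔ ∀ c ∈ cs, d ∈ c.sem I := by
  induction cs with
  | nil => exact absurd rfl hcs
  | cons c cs ih =>
    cases cs with
    | nil => simp [bigInter]
    | cons c' cs =>
      simp only [bigInter, SPL.sem, Set.mem_inter_iff, ih (List.cons_ne_nil _ _),
        List.forall_mem_cons]

lemma mem_sem_ival_self {f : ℕ} {i : ℤ} :
    d ∈ (SPL.ival f i i).sem I ↔ (d, i) ∈ I.cprop f := by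
  simp only [SPL.sem, Set.mem_ofPred_eq]
  exact ⟨fun ⟨j, hij, hji, hj⟩ => le_antisymm hji hij ▸ hj,
    fun h => ⟨i, le_rfl, le_rfl, h⟩⟩

lemma mem_sem_ival_zero_one {f : ℕ} :
    d ∈ (SPL.ival f 0 1).sem I ↔ ∃ b : Bool, (d, b.toInt) ∈ I.cprop f := by
  simp only [SPL.sem, Set.mem_ofPred_eq]
  constructor
  · rintro ⟨i, h0, h1, hi⟩
    obtain rfl | rfl : i = 0 ∨ i = 1 := by omega
    exacts [⟨false, hi⟩, ⟨true, hi⟩]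
  · rintro ⟨b, hb⟩
    exact ⟨b.toInt, by cases b <;> decide, by cases b <;> decide, hb⟩

end Semantics

lemma mem_sem_encLit {I : Interp} {d : I.Δ} (L : Lit) :
    d ∈ (encLit L).sem I ↔ (d, (!L.2).toInt) ∈ I.cprop L.1 := by
  obtain ⟨k, _ | _⟩ := L <;> exact mem_sem_ival_self

def encCube (m : ℕ) : SPL := bigInter ((List.range m).map fun k => SPL.ival k 0 1)

def encClause (cl : Clause) : SPL :=
  SPL.inter (encLit cl.1) (SPL.inter (encLit cl.2.1) (encLit cl.2.2))

lemma mem_sem_encCube {I : Interp} {d : I.Δ} {m : ℕ} (hm : 0 < m) :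
    d ∈ (encCube m).sem I ↔ ∀ k < m, ∃ b : Bool, (d, b.toInt) ∈ I.cprop k := by
  have hne : ((List.range m).map fun k => SPL.ival k 0 1) ≠ [] := by
    simpa [List.range_eq_nil] using hm.ne'
  simp only [encCube, mem_sem_bigInter hne, List.forall_mem_map, List.mem_range,
    mem_sem_ival_zero_one]

lemma mem_sem_encClause {I : Interp} {d : I.Δ} {cl : Clause} :
    d ∈ (encClause cl).sem I ↔
      ∀ L ∈ [cl.1, cl.2.1, cl.2.2], (d, (!L.2).toInt) ∈ I.cprop L.1 := by
  simp only [encClause, SPL.sem, Set.mem_inter_iff, mem_sem_encLit, List.forall_mem_cons,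
    List.not_mem_nil, IsEmpty.forall_iff, implies_true, and_true]

lemma litSat_iff_toInt_ne (σ : ℕ → Bool) (L : Lit) :
    litSat σ L ↔ (σ L.1).toInt ≠ (!L.2).toInt := by
  obtain ⟨k, b⟩ := L
  cases h : σ k <;> cases b <;> simp [litSat, h]

def valInterp (σ : ℕ → Bool) : Interp where
  Δ := Unit
  nonempty := ⟨()⟩
  conc _ := ∅
  role _ := ∅
  cprop k := {p | p.2 = (σ k).toInt}

open scoped Classical in
noncomputable def Interp.valuationAt (I : Interp) (d : I.Δ) (k : ℕ) : Bool :=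
  decide ((d, 1) ∈ I.cprop k)

lemma Interp.mem_cprop_valuationAt {I : Interp} {d : I.Δ} {k : ℕ}
    (h : ∃ b : Bool, (d, b.toInt) ∈ I.cprop k) :
    (d, (I.valuationAt d k).toInt) ∈ I.cprop k := by
  obtain ⟨b, hb⟩ := h
  by_cases h1 : (d, 1) ∈ I.cprop k
  · simp [Interp.valuationAt, h1]
  · cases b
    · simpa [Interp.valuationAt, h1] using hb
    · exact absurd hb h1

lemma Interp.litSat_valuationAt {I : Interp} {d : I.Δ} {L : Lit}
    (h : ∃ b : Bool, (d, b.toInt) ∈ I.cprop L.1) (hL : (d, (!L.2).toInt) ∉ I.cprop L.1) :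
    litSat (I.valuationAt d) L :=
  (litSat_iff_toInt_ne _ L).2 fun heq => hL (heq ▸ I.mem_cprop_valuationAt h)

theorem not_entails_of_sat {m : ℕ} (hm : 0 < m) {S : List Clause} (hS : Sat3 S) :
    ¬ Entails ∅ [encCube m] (S.map encClause) := by
  obtain ⟨σ, hσ⟩ := hS
  intro hent
  have hcube : () ∈ semL (valInterp σ) [encCube m] :=
    mem_semL_singleton.2 <| (mem_sem_encCube hm).2 fun k _ => ⟨σ k, rfl⟩
  obtain ⟨cl, hcl, hmem⟩ := mem_semL_map.1 (hent _ (fun _ h => h.elim) hcube)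
  have hrefuted : ∀ L ∈ [cl.1, cl.2.1, cl.2.2], ¬ litSat σ L := fun L hL hsat =>
    (litSat_iff_toInt_ne σ L).1 hsat (mem_sem_encClause.1 hmem L hL).symm
  rcases hσ cl hcl with h | h | h <;> exact hrefuted _ (by simp) h

theorem sat_of_not_entails {m : ℕ} (hm : 0 < m) {S : List Clause}
    (hvars : ∀ cl ∈ S, cl.1.1 < m ∧ cl.2.1.1 < m ∧ cl.2.2.1 < m)
    (hS : ¬ Entails ∅ [encCube m] (S.map encClause)) : Sat3 S := by
  simp only [Entails, Set.not_subset, not_forall] at hS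
  obtain ⟨I, -, d, hcube, hclauses⟩ := hS
  have hval := (mem_sem_encCube hm).1 (mem_semL_singleton.1 hcube)
  refine ⟨I.valuationAt d, fun cl hcl => ?_⟩
  have hnot : ¬ ∀ L ∈ [cl.1, cl.2.1, cl.2.2], (d, (!L.2).toInt) ∈ I.cprop L.1 :=
    fun h => hclauses (mem_semL_map.2 ⟨cl, hcl, mem_sem_encClause.2 h⟩)
  obtain ⟨h1, h2, h3⟩ := hvars cl hcl
  simp only [List.forall_mem_cons, List.not_mem_nil, IsEmpty.forall_iff, implies_true,
    and_true, not_and_or] at hnot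
  rcases hnot with h | h | h
  exacts [Or.inl (I.litSat_valuationAt (hval _ h1) h),
    Or.inr (Or.inl (I.litSat_valuationAt (hval _ h2) h)),
    Or.inr (Or.inr (I.litSat_valuationAt (hval _ h3) h))]

/-- with `C = ∃p₁.[0,1] ⊓ … ⊓ ∃p_m.[0,1]` and
    `D = ⊔ᵢ (L̃ᵢ₁ ⊓ L̃ᵢ₂ ⊓ L̃ᵢ₃)`, the clause set `S` is satisfiable iff
    the subsumption `C ⊑ D` is not valid (not entailed by the empty KB). -/
theorem statement_1 (m : ℕ) (hm : 0 < m) (S : List Clause)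
    (hvars : ∀ cl ∈ S, cl.1.1 < m ∧ cl.2.1.1 < m ∧ cl.2.2.1 < m) :
    Sat3 S ↔
      ¬ Entails (∅ : Set PLAx)
          [bigInter ((List.range m).map fun k => SPL.ival k 0 1)]
          (S.map fun cl =>
            SPL.inter (encLit cl.1) (SPL.inter (encLit cl.2.1) (encLit cl.2.2))) :=
  ⟨not_entails_of_sat hm, sat_of_not_entails hm hvars⟩

end PLPaper
end

section
/- For every natural number c there is a constant k such that: for every PL concept C = C₁ ⊔ … ⊔ Cₙ in which each simple disjunct C_i contains at most c occurrences of concrete properties, and for every PL concept D, the size of split(C,D) is at most k·|C|·|D|^c. -/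
/-! With `E` the endpoints of `D` (so `|E| ≤ 2|D| - 2`), `splitIval` cuts one interval
constraint into at most `2|E| + 4 ≤ 4|D|` pieces of size one. Splitting a simple disjunct
with at most `c` interval constraints therefore yields at most `(4|D|)^c` disjuncts, none
larger than the original, so `k = 4^c` works. -/

namespace PLPaper

lemma length_chainPieces_le (f : ℕ) : ∀ L : List ℤ, (chainPieces f L).length ≤ 2 * L.length
  | [] => by simp [chainPieces]
  | [x] => by simp [chainPieces]
  | x :: y :: rest => by
      have := length_chainPieces_le f (y :: rest)
      simp only [chainPieces, List.length_cons] at *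
      omega

lemma size_eq_one_of_mem_chainPieces (f : ℕ) :
    ∀ {L : List ℤ} {t : SPL}, t ∈ chainPieces f L → t.size = 1
  | [], _, h => by simp [chainPieces] at h
  | [x], _, h => by simp_all [chainPieces, SPL.size]
  | x :: y :: rest, t, h => by
      simp only [chainPieces, List.mem_cons] at h
      rcases h with rfl | rfl | h
      · rfl
      · rfl
      · exact size_eq_one_of_mem_chainPieces f h

lemma length_cutPoints_le (E : List ℤ) (l u : ℤ) : (cutPoints E l u).length ≤ E.length := by
  rw [cutPoints, Finset.length_sort]
  exact (List.toFinset_card_le _).trans (List.length_filter_le _ _)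

lemma length_splitIval_le (E : List ℤ) (f : ℕ) (l u : ℤ) :
    (splitIval E f l u).length ≤ 2 * E.length + 4 := by
  have h := length_chainPieces_le f (l :: (cutPoints E l u ++ [u]))
  have := length_cutPoints_le E l u
  simp only [List.length_cons, List.length_append, List.length_nil] at h
  rw [splitIval]
  omega

lemma size_le_of_mem_splitC (E : List ℤ) (s : SPL) : ∀ t ∈ s.splitC E, t.size ≤ s.size := by
  induction s with
  | atom a => simp [SPL.splitC]
  | bot => simp [SPL.splitC]
  | ival f l u =>
      intro t ht
      simp [size_eq_one_of_mem_chainPieces f ht, SPL.size]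
  | ex r c ih =>
      simp only [SPL.splitC, List.forall_mem_map, SPL.size]
      exact fun t ht => Nat.add_le_add_right (ih t ht) 1
  | inter c d ihc ihd =>
      simp only [SPL.splitC, List.forall_mem_flatMap, List.forall_mem_map, SPL.size]
      exact fun c' hc' d' hd' =>
        Nat.add_le_add_right (Nat.add_le_add (ihc c' hc') (ihd d' hd')) 1

lemma length_splitC_le (E : List ℤ) (s : SPL) :
    (s.splitC E).length ≤ (2 * E.length + 4) ^ s.ivalsOf.length := by
  induction s with
  | atom a => simp [SPL.splitC, SPL.ivalsOf]
  | bot => simp [SPL.splitC, SPL.ivalsOf]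
  | ival f l u => simpa [SPL.splitC, SPL.ivalsOf] using length_splitIval_le E f l u
  | ex r c ih => simpa [SPL.splitC, SPL.ivalsOf] using ih
  | inter c d ihc ihd =>
      simpa [SPL.splitC, SPL.ivalsOf, pow_add] using Nat.mul_le_mul ihc ihd

lemma sum_size_splitC_le (E : List ℤ) (s : SPL) :
    ((s.splitC E).map SPL.size).sum ≤ (2 * E.length + 4) ^ s.ivalsOf.length * s.size :=
  calc ((s.splitC E).map SPL.size).sum ≤ (s.splitC E).length * s.size := by
        simpa using List.sum_le_card_nsmul ((s.splitC E).map SPL.size) s.size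
          (by simpa using size_le_of_mem_splitC E s)
    _ ≤ _ := Nat.mul_le_mul_right _ (length_splitC_le E s)

lemma length_ivalsOf_le_size (s : SPL) : s.ivalsOf.length ≤ s.size := by
  induction s with
  | ex r c ih => simp only [SPL.ivalsOf, SPL.size]; omega
  | inter c d ihc ihd => simp only [SPL.ivalsOf, SPL.size, List.length_append]; omega
  | _ => simp [SPL.ivalsOf, SPL.size]

lemma length_ivalsL_lt_sizeL (C : PLC) : (ivalsL C).length < sizeL C := by
  rw [ivalsL, List.length_flatMap, sizeL, Nat.lt_succ_iff]
  exact List.sum_le_sum fun s _ => length_ivalsOf_le_size s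

lemma length_endpointsL (D : PLC) : (endpointsL D).length = 2 * (ivalsL D).length := by
  simp [endpointsL, List.length_flatMap, mul_comm]

lemma two_mul_length_endpointsL_add_four_le (D : PLC) :
    2 * (endpointsL D).length + 4 ≤ 4 * sizeL D := by
  have := length_ivalsL_lt_sizeL D
  rw [length_endpointsL]
  omega

lemma sum_size_splitL_le (C D : PLC) (c : ℕ) (hC : ∀ s ∈ C, s.ivalsOf.length ≤ c) :
    ((splitL C D).map SPL.size).sum ≤ (4 * sizeL D) ^ c * (C.map SPL.size).sum :=
  calc ((splitL C D).map SPL.size).sum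
      = (C.map fun s => ((s.splitC (endpointsL D)).map SPL.size).sum).sum := by
        simp [splitL, List.flatMap, Function.comp_def]
    _ ≤ (C.map fun s => (4 * sizeL D) ^ c * s.size).sum := by
        refine List.sum_le_sum fun s hs =>
          (sum_size_splitC_le _ s).trans (Nat.mul_le_mul_right _ ?_)
        exact (Nat.pow_le_pow_left (two_mul_length_endpointsL_add_four_le D) _).trans
          (Nat.pow_le_pow_right (by simp [sizeL]) (hC s hs))
    _ = (4 * sizeL D) ^ c * (C.map SPL.size).sum := List.sum_map_mul_left _ _ _

lemma sizeL_splitL_le (C D : PLC) (c : ℕ) (hC : ∀ s ∈ C, s.ivalsOf.length ≤ c) :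
    sizeL (splitL C D) ≤ (4 * sizeL D) ^ c * sizeL C := by
  have hsum := sum_size_splitL_le C D c hC
  set N := (4 * sizeL D) ^ c
  have hN : 1 ≤ N := Nat.one_le_pow _ _ (by simp [sizeL])
  rw [sizeL, sizeL, Nat.mul_succ]
  omega

/-- for every `c` there is a constant `k` such that for every PL concept
    `C = C₁ ⊔ … ⊔ Cₙ` whose simple disjuncts each contain at most `c` occurrences of
    concrete properties, and every PL concept `D`,
    `|split(C,D)| ≤ k · |C| · |D|^c`. -/
theorem statement_3 (c : ℕ) :
    ∃ k : ℕ, ∀ C D : PLC, C ≠ [] → D ≠ [] →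
      (∀ s ∈ C, s.ivalsOf.length ≤ c) →
      sizeL (splitL C D) ≤ k * sizeL C * sizeL D ^ c :=
  ⟨4 ^ c, fun C D _ _ hC => (sizeL_splitL_le C D c hC).trans_eq (by ring)⟩

end PLPaper
end

section
/- If a PL concept C rewrites to C' by one application of any of the seven normalization rules with respect to a PL knowledge base K, then K ⊨ C ≡ C'. -/
namespace PLPaper


lemma mem_conj_sem (I : Interp) (C : SPL) (d : I.Δ) :
    d ∈ C.sem I ↔ ∀ c ∈ C.conj, d ∈ c.sem I := by
  induction C with
  | inter c e ihc ihe =>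
      simp [SPL.sem, SPL.conj, Multiset.mem_add, or_imp, forall_and, ihc, ihe]
  | atom a => simp [SPL.conj]
  | bot => simp [SPL.conj]
  | ival f l u => simp [SPL.conj]
  | ex r c ih => simp [SPL.conj]

lemma substar_subset {K : Set PLAx} {I : Interp} (hI : I.satKB K) {a b : ℕ}
    (h : SubStar K a b) : I.conc a ⊆ I.conc b := by
  induction h with
  | refl => exact subset_rfl
  | tail _ hab ih => exact ih.trans (hI _ hab)

/-- if `C ⇝ C'` by one application of any of the seven normalization
    rules w.r.t. the PL knowledge base `K`, then `K ⊨ C ≡ C'`. -/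
theorem statement_4 (K : Set PLAx) (hK : K.Finite) (C C' : SPL) (h : Rw K C C') :
    ∀ I : Interp, I.satKB K → SPL.sem I C = SPL.sem I C' := by
  induction h with
  | botConj C hmem hne =>
      intro I hI
      ext d
      simp only [SPL.sem, Set.mem_empty_iff_false, iff_false]
      intro hd
      have := (mem_conj_sem I C d).mp hd _ hmem
      simpa [SPL.sem] using this
  | exBot r =>
      intro I hI; ext d; simp [SPL.sem]
  | emptyIval f l u hlt =>
      intro I hI; ext d
      simp only [SPL.sem, Set.mem_setOf_eq, Set.mem_empty_iff_false, iff_false]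
      rintro ⟨i, h1, h2, -⟩; omega
  | funcRole C C' r D D' rest hK' hC hC' =>
      intro I hI
      have hfun := hI _ hK'
      have key : ∀ d : I.Δ,
          (d ∈ (SPL.ex r D).sem I ∧ d ∈ (SPL.ex r D').sem I) ↔
            d ∈ (SPL.ex r (SPL.inter D D')).sem I := by
        intro d
        simp only [SPL.sem, Set.mem_setOf_eq, Set.mem_inter_iff]
        constructor
        · rintro ⟨⟨e, he, hD⟩, ⟨e', he', hD'⟩⟩
          exact ⟨e, he, hD, (hfun he he').symm ▸ hD'⟩
        · rintro ⟨e, he, hD, hD'⟩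
          exact ⟨⟨e, he, hD⟩, ⟨e, he, hD'⟩⟩
      ext d
      rw [mem_conj_sem, mem_conj_sem, hC, hC']
      simp only [Multiset.mem_add, Multiset.insert_eq_cons, Multiset.mem_cons,
        Multiset.mem_singleton, or_imp, forall_and, forall_eq]
      constructor
      · rintro ⟨⟨h1, h2⟩, h3⟩; exact ⟨(key d).mp ⟨h1, h2⟩, h3⟩
      · rintro ⟨h1, h2⟩
        obtain ⟨a, b⟩ := (key d).mpr h1
        exact ⟨⟨a, b⟩, h2⟩
  | funcProp C C' f l₁ u₁ l₂ u₂ rest hK' hC hC' =>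
      intro I hI
      have hfun := hI _ hK'
      have key : ∀ d : I.Δ,
          (d ∈ (SPL.ival f l₁ u₁).sem I ∧ d ∈ (SPL.ival f l₂ u₂).sem I) ↔
            d ∈ (SPL.ival f (max l₁ l₂) (min u₁ u₂)).sem I := by
        intro d
        simp only [SPL.sem, Set.mem_setOf_eq]
        constructor
        · rintro ⟨⟨i, hi1, hi2, hi⟩, ⟨j, hj1, hj2, hj⟩⟩
          have := hfun hi hj
          exact ⟨i, by omega, by omega, hi⟩
        · rintro ⟨i, hi1, hi2, hi⟩
          exact ⟨⟨i, by omega, by omega, hi⟩, ⟨i, by omega, by omega, hi⟩⟩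
      ext d
      rw [mem_conj_sem, mem_conj_sem, hC, hC']
      simp only [Multiset.mem_add, Multiset.insert_eq_cons, Multiset.mem_cons,
        Multiset.mem_singleton, or_imp, forall_and, forall_eq]
      constructor
      · rintro ⟨⟨h1, h2⟩, h3⟩; exact ⟨(key d).mp ⟨h1, h2⟩, h3⟩
      · rintro ⟨h1, h2⟩
        obtain ⟨a, b⟩ := (key d).mpr h1
        exact ⟨⟨a, b⟩, h2⟩
  | rangeRule C C' r a D rest hK' hna hnb hC hC' =>
      intro I hI
      have hrange := hI _ hK'
      have key : ∀ d : I.Δ,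
          d ∈ (SPL.ex r D).sem I ↔ d ∈ (SPL.ex r (SPL.inter D (SPL.atom a))).sem I := by
        intro d
        simp only [SPL.sem, Set.mem_setOf_eq, Set.mem_inter_iff]
        constructor
        · rintro ⟨e, he, hD⟩; exact ⟨e, he, hD, hrange he⟩
        · rintro ⟨e, he, hD, -⟩; exact ⟨e, he, hD⟩
      ext d
      rw [mem_conj_sem, mem_conj_sem, hC, hC']
      simp only [Multiset.mem_add, or_imp, forall_and, Multiset.mem_singleton, forall_eq]
      rw [key d]
  | disjRule C a₁ a₂ b₁ b₂ h1 h2 hs1 hs2 hd =>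
      intro I hI
      ext d
      simp only [SPL.sem, Set.mem_empty_iff_false, iff_false]
      intro hdC
      have hm := (mem_conj_sem I C d).mp hdC
      have ha1 : d ∈ I.conc a₁ := by simpa [SPL.sem] using hm _ h1
      have ha2 : d ∈ I.conc a₂ := by simpa [SPL.sem] using hm _ h2
      have : d ∈ I.conc b₁ ∩ I.conc b₂ :=
        ⟨substar_subset hI hs1 ha1, substar_subset hI hs2 ha2⟩
      rw [hI _ hd] at this
      exact this
  | exCongr r c c' _ ih =>
      intro I hI
      ext d
      simp only [SPL.sem, Set.mem_setOf_eq, ih I hI]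
  | interCongr C C' c c' rest _ hC hC' ih =>
      intro I hI
      ext d
      rw [mem_conj_sem, mem_conj_sem, hC, hC']
      simp only [Multiset.mem_add, or_imp, forall_and, Multiset.mem_singleton, forall_eq]
      rw [ih I hI]


end PLPaper
end

section
/- Let K and O be knowledge bases and α a general concept inclusion such that: (1) K and α are formulated in SROIQ(D) without the universal role, where D is the concrete domain of integer intervals; (2) the terminological part of O enjoys the disjoint model union property; (3) the terminological part of K is local with respect to sig(O); and (4) (sig(K) ∪ sig(α)) ∩ sig(O) contains only concept names. Then K ∪ O ⊨ α if and only if K ∪ pos(O) ⊨ α. -/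
namespace SROIQPaper

/-! A model `I` of `K ∪ pos(O)` violates, at each element `e`, the query stating that the
`sig(O)`-concept type of `e` is impossible; so that query is not in `pos(O)`, and the type of `e`
is realised by an element `x e` of some model of `O`. By the disjoint model union property the
disjoint union `U` of these models is again a model of `O`. Interpreting the symbols outside
`sig(O)` on `U` as copies of their interpretation in `I` along `e ↦ ⟨e, x e⟩` keeps `O` true, since
`O` only sees `U`. It makes `K` true as well: on the copy of `I` because `K` shares only concept
names with `O`, and those agree with `I` there; off the copy because every symbol outside `sig(O)`
is empty there, which is where locality of `K` applies. As `α` also shares only concept names with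
`O`, a counterexample to `α` in `I` becomes one in this model of `K ∪ O`. -/

open Set Function

lemma Cpt.cNames_finite (c : Cpt) : c.cNames.Finite := by
  induction c <;> simp_all [Cpt.cNames]

lemma Ax.cNames_finite (ax : Ax) : ax.cNames.Finite := by
  cases ax <;> simp [Ax.cNames, Cpt.cNames_finite]

lemma sigC_finite {O : Set Ax} (hO : O.Finite) : (sigC O).Finite := by
  have h : sigC O = ⋃ ax ∈ O, ax.cNames := by ext; simp [sigC]
  exact h ▸ hO.biUnion fun ax _ => ax.cNames_finite

open Classical in
noncomputable def typeQuery (S : Finset ℕ) (I : Interp) (e : I.Δ) : OQuery :=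
  ⟨(S.filter (e ∈ I.conc ·)).toList, (S.filter (e ∉ I.conc ·)).toList⟩

lemma not_satQ_typeQuery_iff {S : Finset ℕ} {I J : Interp} {e : I.Δ} :
    ¬ J.satQ (typeQuery S I e) ↔ ∃ x : J.Δ, ∀ a ∈ S, x ∈ J.conc a ↔ e ∈ I.conc a := by
  simp only [Interp.satQ, typeQuery, not_subset, mem_ofPred_eq, Finset.mem_toList,
    Finset.mem_filter, not_exists, not_and, and_imp]
  refine exists_congr fun x => ⟨fun ⟨h₁, h₂⟩ a ha => ?_, fun h => ?_⟩
  · by_cases hea : e ∈ I.conc a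
    · exact iff_of_true (h₁ a ha hea) hea
    · exact iff_of_false (h₂ a ha hea) hea
  · exact ⟨fun a ha hea => (h a ha).mpr hea, fun a ha hea hxa => hea ((h a ha).mp hxa)⟩

lemma exists_model_realizing_type {O : Set Ax} (hO : (sigC O).Finite) {I : Interp}
    (hI : ∀ q ∈ pos O, I.satQ q) (e : I.Δ) :
    ∃ (J : Interp) (x : J.Δ), J.sat O ∧ ∀ a ∈ sigC O, x ∈ J.conc a ↔ e ∈ I.conc a := by
  have hq : typeQuery hO.toFinset I e ∉ pos O := fun hq =>
    not_satQ_typeQuery_iff.mpr ⟨e, fun _ _ => Iff.rfl⟩ (hI _ hq)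
  simp only [pos, typeQuery, Finset.mem_toList, Finset.mem_filter, Finite.mem_toFinset,
    mem_ofPred_eq, not_and, not_forall] at hq
  obtain ⟨J, hJ, hJq⟩ := hq (fun a ha => ha.1) (fun a ha => ha.1)
  obtain ⟨x, hx⟩ := not_satQ_typeQuery_iff.mp hJq
  exact ⟨J, x, hJ, fun a ha => hx a (hO.mem_toFinset.mpr ha)⟩

lemma exists_finset_subset_image_iff {α β : Type*} {g : α → β} (hg : Injective g)
    (s : Set α) (n : ℕ) :
    (∃ t : Finset β, n ≤ t.card ∧ ∀ y ∈ t, y ∈ g '' s) ↔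
      ∃ t : Finset α, n ≤ t.card ∧ ∀ x ∈ t, x ∈ s := by
  classical
  constructor
  · rintro ⟨t, hn, ht⟩
    obtain ⟨t', ht's, rfl⟩ := Finset.subset_set_image_iff.mp ht
    exact ⟨t', (Finset.card_image_of_injective t' hg) ▸ hn, ht's⟩
  · rintro ⟨t, hn, ht⟩
    refine ⟨t.image g, (Finset.card_image_of_injective t hg).symm ▸ hn, ?_⟩
    intro y hy
    obtain ⟨x, hx, rfl⟩ := Finset.mem_image.mp hy
    exact mem_image_of_mem g (ht x hx)

structure IsSigEmbedding (I₁ I₂ : Interp) (g : I₁.Δ → I₂.Δ) (SC SR SF SI : Set ℕ) : Prop where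
  injective : Injective g
  conc : ∀ a ∈ SC, ∀ e, g e ∈ I₂.conc a ↔ e ∈ I₁.conc a
  role : ∀ r ∈ SR, ∀ e e', (g e, g e') ∈ I₂.role r ↔ (e, e') ∈ I₁.role r
  role_out : ∀ r ∈ SR, ∀ e y, (g e, y) ∈ I₂.role r → y ∈ range g
  role_in : ∀ r ∈ SR, ∀ e y, (y, g e) ∈ I₂.role r → y ∈ range g
  cprop : ∀ f ∈ SF, ∀ e i, (g e, i) ∈ I₂.cprop f ↔ (e, i) ∈ I₁.cprop f
  ind : ∀ a ∈ SI, I₂.ind a = g (I₁.ind a)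

namespace IsSigEmbedding

variable {I₁ I₂ : Interp} {g : I₁.Δ → I₂.Δ} {SC SR SF SI : Set ℕ}
  (H : IsSigEmbedding I₁ I₂ g SC SR SF SI)
include H

lemma mem_rlSem_iff {r : Rl} (hr : r.base ∈ SR) (e e' : I₁.Δ) :
    (g e, g e') ∈ r.sem I₂ ↔ (e, e') ∈ r.sem I₁ := by
  cases r with
  | name n => exact H.role n hr e e'
  | inv n => exact H.role n hr e' e

lemma mem_range_of_mem_rlSem {r : Rl} (hr : r.base ∈ SR) {e : I₁.Δ} {y : I₂.Δ}
    (h : (g e, y) ∈ r.sem I₂) : y ∈ range g := by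
  cases r with
  | name n => exact H.role_out n hr e y h
  | inv n => exact H.role_in n hr e y h

lemma rlSem_succ_eq_image {r : Rl} (hr : r.base ∈ SR) {c₁ : Set I₁.Δ} {c₂ : Set I₂.Δ}
    (hc : ∀ e, g e ∈ c₂ ↔ e ∈ c₁) (e : I₁.Δ) :
    {y | (g e, y) ∈ r.sem I₂ ∧ y ∈ c₂} = g '' {e' | (e, e') ∈ r.sem I₁ ∧ e' ∈ c₁} := by
  ext y
  constructor
  · rintro ⟨hy, hyc⟩
    obtain ⟨e', rfl⟩ := H.mem_range_of_mem_rlSem hr hy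
    exact ⟨e', ⟨(H.mem_rlSem_iff hr e e').mp hy, (hc e').mp hyc⟩, rfl⟩
  · rintro ⟨e', ⟨he', he'c⟩, rfl⟩
    exact ⟨(H.mem_rlSem_iff hr e e').mpr he', (hc e').mpr he'c⟩

theorem mem_sem_iff {C : Cpt} (hc : C.cNames ⊆ SC) (hr : C.rNames ⊆ SR) (hf : C.fNames ⊆ SF)
    (hi : C.iNames ⊆ SI) (e : I₁.Δ) : g e ∈ C.sem I₂ ↔ e ∈ C.sem I₁ := by
  induction C generalizing e with
  | atom a => exact H.conc a (hc rfl) e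
  | top | bot => exact Iff.rfl
  | nom a =>
    change g e = I₂.ind a ↔ e = I₁.ind a
    rw [H.ind a (hi rfl), H.injective.eq_iff]
  | neg c ih => exact not_congr (ih hc hr hf hi e)
  | and c d ihc ihd =>
    obtain ⟨hc₁, hc₂⟩ := union_subset_iff.mp hc
    obtain ⟨hr₁, hr₂⟩ := union_subset_iff.mp hr
    obtain ⟨hf₁, hf₂⟩ := union_subset_iff.mp hf
    obtain ⟨hi₁, hi₂⟩ := union_subset_iff.mp hi
    exact and_congr (ihc hc₁ hr₁ hf₁ hi₁ e) (ihd hc₂ hr₂ hf₂ hi₂ e)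
  | or c d ihc ihd =>
    obtain ⟨hc₁, hc₂⟩ := union_subset_iff.mp hc
    obtain ⟨hr₁, hr₂⟩ := union_subset_iff.mp hr
    obtain ⟨hf₁, hf₂⟩ := union_subset_iff.mp hf
    obtain ⟨hi₁, hi₂⟩ := union_subset_iff.mp hi
    exact or_congr (ihc hc₁ hr₁ hf₁ hi₁ e) (ihd hc₂ hr₂ hf₂ hi₂ e)
  | ex r c ih =>
    obtain ⟨hrb, hrc⟩ := insert_subset_iff.mp hr
    change {y | _ ∧ _}.Nonempty ↔ {e' | _ ∧ _}.Nonempty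
    rw [H.rlSem_succ_eq_image hrb (ih hc hrc hf hi) e, image_nonempty]
  | all r c ih =>
    obtain ⟨hrb, hrc⟩ := insert_subset_iff.mp hr
    refine ⟨fun h e' he' => (ih hc hrc hf hi e').mp (h _ ((H.mem_rlSem_iff hrb e e').mpr he')),
      fun h y hy => ?_⟩
    obtain ⟨e', rfl⟩ := H.mem_range_of_mem_rlSem hrb hy
    exact (ih hc hrc hf hi e').mpr (h e' ((H.mem_rlSem_iff hrb e e').mp hy))
  | atLeast n r c ih =>
    obtain ⟨hrb, hrc⟩ := insert_subset_iff.mp hr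
    change (∃ t : Finset I₂.Δ, n ≤ t.card ∧ ∀ y ∈ t, y ∈ {y | (g e, y) ∈ r.sem I₂ ∧ y ∈ c.sem I₂}) ↔
      ∃ t : Finset I₁.Δ, n ≤ t.card ∧ ∀ y ∈ t, y ∈ {e' | (e, e') ∈ r.sem I₁ ∧ e' ∈ c.sem I₁}
    rw [H.rlSem_succ_eq_image hrb (ih hc hrc hf hi) e]
    exact exists_finset_subset_image_iff H.injective _ n
  | atMost n r c ih =>
    obtain ⟨hrb, hrc⟩ := insert_subset_iff.mp hr
    change {y | _ ∧ _}.Finite ∧ {y | _ ∧ _}.ncard ≤ n ↔ {e' | _ ∧ _}.Finite ∧ {e' | _ ∧ _}.ncard ≤ n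
    rw [H.rlSem_succ_eq_image hrb (ih hc hrc hf hi) e, finite_image_iff H.injective.injOn,
      ncard_image_of_injective _ H.injective]
  | selfC r => exact H.mem_rlSem_iff (hr rfl) e e
  | ival f l u =>
    change (∃ i, l ≤ i ∧ i ≤ u ∧ (g e, i) ∈ I₂.cprop f) ↔ ∃ i, l ≤ i ∧ i ≤ u ∧ (e, i) ∈ I₁.cprop f
    simp only [H.cprop f (hf rfl)]

lemma mem_chain_iff_mem_image {rs : List Rl} (hrs : ∀ s ∈ rs, s.base ∈ SR) (e : I₁.Δ) (w : I₂.Δ) :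
    (g e, w) ∈ chain I₂ rs ↔ w ∈ g '' {e' | (e, e') ∈ chain I₁ rs} := by
  induction rs generalizing e with
  | nil => exact ⟨fun h => ⟨e, rfl, h⟩, fun ⟨_, he', hw⟩ => hw ▸ congrArg g he'⟩
  | cons s rest ih =>
    have hs := hrs s List.mem_cons_self
    have ih := ih fun t ht => hrs t (List.mem_cons_of_mem s ht)
    constructor
    · rintro ⟨z, hz, hzw⟩
      obtain ⟨e₁, rfl⟩ := H.mem_range_of_mem_rlSem hs hz
      obtain ⟨e', he', rfl⟩ := (ih e₁).mp hzw
      exact ⟨e', ⟨e₁, (H.mem_rlSem_iff hs e e₁).mp hz, he'⟩, rfl⟩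
    · rintro ⟨e', ⟨e₁, he₁, he'⟩, rfl⟩
      exact ⟨g e₁, (H.mem_rlSem_iff hs e e₁).mpr he₁, (ih e₁).mpr ⟨e', he', rfl⟩⟩

lemma mem_chain_iff {rs : List Rl} (hrs : ∀ s ∈ rs, s.base ∈ SR) (e e' : I₁.Δ) :
    (g e, g e') ∈ chain I₂ rs ↔ (e, e') ∈ chain I₁ rs := by
  rw [H.mem_chain_iff_mem_image hrs, H.injective.mem_set_image, mem_ofPred_eq]

theorem satAx {ax : Ax} (hsurj : isTerm ax → Surjective g) (hc : ax.cNames ⊆ SC)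
    (hr : ax.rNames ⊆ SR) (hf : ax.fNames ⊆ SF) (hi : ax.iNames ⊆ SI) (h : I₁.satAx ax) :
    I₂.satAx ax := by
  cases ax with
  | gci c d =>
    rintro z hz
    obtain ⟨e, rfl⟩ := hsurj trivial z
    obtain ⟨hc₁, hc₂⟩ := union_subset_iff.mp hc
    obtain ⟨hr₁, hr₂⟩ := union_subset_iff.mp hr
    obtain ⟨hf₁, hf₂⟩ := union_subset_iff.mp hf
    obtain ⟨hi₁, hi₂⟩ := union_subset_iff.mp hi
    exact (H.mem_sem_iff hc₂ hr₂ hf₂ hi₂ e).mpr (h ((H.mem_sem_iff hc₁ hr₁ hf₁ hi₁ e).mp hz))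
  | rdisj r s =>
    refine eq_empty_of_forall_notMem fun p ⟨hpr, hps⟩ => ?_
    obtain ⟨⟨e, e'⟩, rfl⟩ := (hsurj trivial).prodMap (hsurj trivial) p
    have hrb : r.base ∈ SR := hr (Or.inl rfl)
    have hsb : s.base ∈ SR := hr (Or.inr rfl)
    exact (h.subset ⟨(H.mem_rlSem_iff hrb e e').mp hpr, (H.mem_rlSem_iff hsb e e').mp hps⟩ :)
  | rincl rs r =>
    rintro p hp
    obtain ⟨⟨e, e'⟩, rfl⟩ := (hsurj trivial).prodMap (hsurj trivial) p
    have hrs : ∀ s ∈ rs, s.base ∈ SR := fun s hs => hr (Or.inr ⟨s, hs, rfl⟩)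
    exact (H.mem_rlSem_iff (hr (Or.inl rfl)) e e').mpr (h ((H.mem_chain_iff hrs e e').mp hp))
  | cassert c a =>
    change I₂.ind a ∈ c.sem I₂
    rw [H.ind a (hi (Or.inl rfl))]
    exact (H.mem_sem_iff hc hr hf (fun n hn => hi (Or.inr hn)) _).mpr h
  | rassert r a b =>
    change (I₂.ind a, I₂.ind b) ∈ r.sem I₂
    rw [H.ind a (hi (Or.inl rfl)), H.ind b (hi (Or.inr rfl))]
    exact (H.mem_rlSem_iff (hr rfl) _ _).mpr h

end IsSigEmbedding

lemma isSigEmbedding_sigmaUnion {ι : Type} (J : ι → Interp) (i₀ : ι) :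
    IsSigEmbedding (J i₀) (sigmaUnion J i₀) (fun x => ⟨i₀, x⟩) univ univ univ univ where
  injective := sigma_mk_injective (β := fun i => (J i).Δ)
  conc _ _ _ := Iff.rfl
  role r _ e e' := by
    constructor
    · rintro ⟨i, x, y, hx, hy, hr⟩
      obtain ⟨rfl, hx⟩ := Sigma.mk.inj_iff.mp hx
      obtain ⟨-, hy⟩ := Sigma.mk.inj_iff.mp hy
      rwa [eq_of_heq hx, eq_of_heq hy]
    · exact fun h => ⟨i₀, e, e', rfl, rfl, h⟩
  role_out r _ e y := by
    rintro ⟨i, x, y', hx, hy', -⟩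
    obtain ⟨rfl, -⟩ := Sigma.mk.inj_iff.mp hx
    exact ⟨y', hy'.symm⟩
  role_in r _ e y := by
    rintro ⟨i, x, y', hx, hy', -⟩
    obtain ⟨rfl, -⟩ := Sigma.mk.inj_iff.mp hy'
    exact ⟨x, hx.symm⟩
  cprop _ _ _ _ := Iff.rfl
  ind _ _ := rfl

lemma sigmaUnion_sat {O : Set Ax} (hO : DMUP (termPart O)) {ι : Type} {J : ι → Interp}
    (hJ : ∀ i, (J i).sat O) (i₀ : ι) : (sigmaUnion J i₀).sat O := by
  intro ax hax
  by_cases hterm : isTerm ax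
  · exact hO ι J i₀ (fun i ax hax => hJ i ax hax.1) ax ⟨hax, hterm⟩
  · exact (isSigEmbedding_sigmaUnion J i₀).satAx (fun h => absurd h hterm)
      (subset_univ _) (subset_univ _) (subset_univ _) (subset_univ _) (hJ i₀ ax hax)

structure IsolatedOutside (M : Interp) (z : M.Δ) (SC SR SF : Set ℕ) : Prop where
  conc : ∀ a ∉ SC, z ∉ M.conc a
  role : ∀ r ∉ SR, ∀ y, (z, y) ∉ M.role r ∧ (y, z) ∉ M.role r
  cprop : ∀ f ∉ SF, ∀ i, (z, i) ∉ M.cprop f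

lemma IsolatedOutside.notMem_rlSem {M : Interp} {z : M.Δ} {SC SR SF : Set ℕ}
    (hz : IsolatedOutside M z SC SR SF) {r : Rl} (hr : r.base ∉ SR) (y : M.Δ) :
    (z, y) ∉ r.sem M := by
  cases r with
  | name n => exact (hz.role n hr y).1
  | inv n => exact (hz.role n hr y).2

lemma notMem_rlSem_localize {M : Interp} {SC SR SF : Set ℕ} {r : Rl} (hr : r.base ∉ SR)
    (p : M.Δ × M.Δ) : p ∉ r.sem (localize M SC SR SF) := by
  cases r with
  | name n => exact fun h => hr h.1
  | inv n => exact fun h => hr h.1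

lemma mem_sem_atMost_of_forall_notMem {N : Interp} {x : N.Δ} {r : Rl}
    (hx : ∀ y, (x, y) ∉ r.sem N) (n : ℕ) (c : Cpt) : x ∈ (Cpt.atMost n r c).sem N := by
  have hempty : {y | (x, y) ∈ r.sem N ∧ y ∈ c.sem N} = ∅ :=
    eq_empty_of_forall_notMem fun y hy => hx y hy.1
  exact ⟨hempty ▸ finite_empty, by rw [hempty, ncard_empty]; exact n.zero_le⟩

theorem IsolatedOutside.mem_sem_localize_iff {M : Interp} {z : M.Δ} {SC SR SF : Set ℕ}
    (hz : IsolatedOutside M z SC SR SF) {C : Cpt} (hr : C.rNames ⊆ SRᶜ) :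
    z ∈ C.sem (localize M SC SR SF) ↔ z ∈ C.sem M := by
  have no_succ : ∀ r : Rl, r.base ∉ SR →
      (∀ y, (z, y) ∉ r.sem (localize M SC SR SF)) ∧ ∀ y, (z, y) ∉ r.sem M :=
    fun r hr => ⟨fun y => notMem_rlSem_localize hr _, hz.notMem_rlSem hr⟩
  induction C with
  | atom a =>
    by_cases ha : a ∈ SC
    · exact and_iff_right ha
    · exact iff_of_false (fun h => ha h.1) (hz.conc a ha)
  | top | bot | nom a => exact Iff.rfl
  | neg c ih => exact not_congr (ih hr)
  | and c d ihc ihd =>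
    obtain ⟨hr₁, hr₂⟩ := union_subset_iff.mp hr
    exact and_congr (ihc hr₁) (ihd hr₂)
  | or c d ihc ihd =>
    obtain ⟨hr₁, hr₂⟩ := union_subset_iff.mp hr
    exact or_congr (ihc hr₁) (ihd hr₂)
  | ex r c =>
    obtain ⟨h₁, h₂⟩ := no_succ r (hr (mem_insert _ _))
    exact iff_of_false (fun ⟨y, hy, _⟩ => h₁ y hy) (fun ⟨y, hy, _⟩ => h₂ y hy)
  | all r c =>
    obtain ⟨h₁, h₂⟩ := no_succ r (hr (mem_insert _ _))
    exact iff_of_true (fun y hy => (h₁ y hy).elim) (fun y hy => (h₂ y hy).elim)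
  | atLeast n r c =>
    obtain ⟨h₁, h₂⟩ := no_succ r (hr (mem_insert _ _))
    exact ⟨fun ⟨t, hn, ht⟩ => ⟨t, hn, fun y hy => (h₁ y (ht y hy).1).elim⟩,
      fun ⟨t, hn, ht⟩ => ⟨t, hn, fun y hy => (h₂ y (ht y hy).1).elim⟩⟩
  | atMost n r c =>
    obtain ⟨h₁, h₂⟩ := no_succ r (hr (mem_insert _ _))
    exact iff_of_true (mem_sem_atMost_of_forall_notMem h₁ n c)
      (mem_sem_atMost_of_forall_notMem h₂ n c)
  | selfC r =>
    obtain ⟨h₁, h₂⟩ := no_succ r (hr rfl)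
    exact iff_of_false (h₁ z) (h₂ z)
  | ival f l u =>
    by_cases hf : f ∈ SF
    · exact exists_congr fun i => and_congr_right' (and_congr_right' (and_iff_right hf))
    · exact iff_of_false (fun ⟨i, _, _, h⟩ => hf h.1) (fun ⟨i, _, _, h⟩ => hz.cprop f hf i h)

open Classical in
noncomputable def amalgam (I U : Interp) (g : I.Δ → U.Δ) (SC SR SF SI : Set ℕ) : Interp where
  Δ := U.Δ
  nonempty := U.nonempty
  conc a := if a ∈ SC then U.conc a else g '' I.conc a
  role r := if r ∈ SR then U.role r else Prod.map g g '' I.role r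
  cprop f := if f ∈ SF then U.cprop f else Prod.map g id '' I.cprop f
  ind a := if a ∈ SI then U.ind a else g (I.ind a)

section Amalgam

variable {I U : Interp} {g : I.Δ → U.Δ} {SC SR SF SI : Set ℕ}

lemma isSigEmbedding_amalgam_right :
    IsSigEmbedding U (amalgam I U g SC SR SF SI) id SC SR SF SI where
  injective := injective_id
  conc a ha _ := by simp only [amalgam, if_pos ha]; exact Iff.rfl
  role r hr _ _ := by simp only [amalgam, if_pos hr]; exact Iff.rfl
  role_out _ _ _ y _ := ⟨y, rfl⟩
  role_in _ _ _ y _ := ⟨y, rfl⟩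
  cprop f hf _ _ := by simp only [amalgam, if_pos hf]; exact Iff.rfl
  ind a ha := if_pos ha

lemma isSigEmbedding_amalgam_left (hg : Injective g)
    (hconc : ∀ a ∈ SC, ∀ e, g e ∈ U.conc a ↔ e ∈ I.conc a) :
    IsSigEmbedding I (amalgam I U g SC SR SF SI) g univ SRᶜ SFᶜ SIᶜ where
  injective := hg
  conc a _ e := by
    by_cases ha : a ∈ SC
    · simp only [amalgam, if_pos ha]
      exact hconc a ha e
    · simp only [amalgam, if_neg ha]
      exact hg.mem_set_image
  role r hr e e' := by
    simp only [amalgam, if_neg hr]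
    exact (hg.prodMap hg).mem_set_image (a := (e, e'))
  role_out r hr e y h := by
    simp only [amalgam, if_neg hr] at h
    obtain ⟨⟨a, b⟩, -, hab⟩ := h
    exact ⟨b, (Prod.ext_iff.mp hab).2⟩
  role_in r hr e y h := by
    simp only [amalgam, if_neg hr] at h
    obtain ⟨⟨a, b⟩, -, hab⟩ := h
    exact ⟨a, (Prod.ext_iff.mp hab).1⟩
  cprop f hf e i := by
    simp only [amalgam, if_neg hf]
    exact (hg.prodMap injective_id).mem_set_image (a := (e, i))
  ind a ha := if_neg ha

lemma isolatedOutside_amalgam {z : U.Δ} (hz : z ∉ range g) :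
    IsolatedOutside (amalgam I U g SC SR SF SI) z SC SR SF where
  conc a ha h := by
    simp only [amalgam, if_neg ha] at h
    exact hz (image_subset_range _ _ h)
  role r hr y := by
    simp only [amalgam, if_neg hr]
    constructor
    · rintro ⟨⟨a, b⟩, -, hab⟩
      exact hz ⟨a, (Prod.ext_iff.mp hab).1⟩
    · rintro ⟨⟨a, b⟩, -, hab⟩
      exact hz ⟨b, (Prod.ext_iff.mp hab).2⟩
  cprop f hf i h := by
    simp only [amalgam, if_neg hf] at h
    obtain ⟨⟨a, b⟩, -, hab⟩ := h
    exact hz ⟨a, (Prod.ext_iff.mp hab).1⟩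

lemma fst_mem_range_of_mem_rlSem_amalgam {r : Rl} (hr : r.base ∉ SR)
    {p : U.Δ × U.Δ} (hp : p ∈ r.sem (amalgam I U g SC SR SF SI)) : p.1 ∈ range g := by
  by_contra hz
  exact (isolatedOutside_amalgam hz).notMem_rlSem hr p.2 hp

lemma amalgam_satAx_of_disjoint (hg : Injective g)
    (hconc : ∀ a ∈ SC, ∀ e, g e ∈ U.conc a ↔ e ∈ I.conc a) {ax : Ax}
    (hr : ax.rNames ⊆ SRᶜ) (hf : ax.fNames ⊆ SFᶜ) (hi : ax.iNames ⊆ SIᶜ) (hI : I.satAx ax)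
    (hloc : isTerm ax → (localize (amalgam I U g SC SR SF SI) SC SR SF).satAx ax) :
    (amalgam I U g SC SR SF SI).satAx ax := by
  have H := isSigEmbedding_amalgam_left (SR := SR) (SF := SF) (SI := SI) hg hconc
  cases ax with
  | gci c d =>
    obtain ⟨hr₁, hr₂⟩ := union_subset_iff.mp hr
    obtain ⟨hf₁, hf₂⟩ := union_subset_iff.mp hf
    obtain ⟨hi₁, hi₂⟩ := union_subset_iff.mp hi
    intro z hz
    by_cases hzg : z ∈ range g
    · obtain ⟨e, rfl⟩ := hzg
      exact (H.mem_sem_iff (subset_univ _) hr₂ hf₂ hi₂ e).mpr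
        (hI ((H.mem_sem_iff (subset_univ _) hr₁ hf₁ hi₁ e).mp hz))
    · have hiso := isolatedOutside_amalgam (SC := SC) (SR := SR) (SF := SF) (SI := SI) hzg
      exact (hiso.mem_sem_localize_iff hr₂).mp
        (hloc trivial ((hiso.mem_sem_localize_iff hr₁).mpr hz))
  | rdisj r s =>
    refine eq_empty_of_forall_notMem fun ⟨z, w⟩ ⟨hzr, hzs⟩ => ?_
    have hrb : r.base ∈ SRᶜ := hr (Or.inl rfl)
    have hsb : s.base ∈ SRᶜ := hr (Or.inr rfl)
    obtain ⟨e, rfl⟩ := fst_mem_range_of_mem_rlSem_amalgam hrb hzr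
    obtain ⟨e', rfl⟩ := H.mem_range_of_mem_rlSem hrb hzr
    exact (hI.subset ⟨(H.mem_rlSem_iff hrb e e').mp hzr, (H.mem_rlSem_iff hsb e e').mp hzs⟩ :)
  | rincl rs r =>
    have hrb : r.base ∈ SRᶜ := hr (Or.inl rfl)
    cases rs with
    | nil =>
      -- a local `ε ⊑ r` is impossible: the localization empties `r` but not the diagonal
      obtain ⟨z⟩ := U.nonempty
      exact (notMem_rlSem_localize (M := amalgam I U g SC SR SF SI) hrb (z, z)
        (hloc trivial rfl)).elim
    | cons s rest =>
      rintro ⟨_, w⟩ ⟨z, hz, hzw⟩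
      have hrs : ∀ t ∈ s :: rest, t.base ∈ SRᶜ := fun t ht => hr (Or.inr ⟨t, ht, rfl⟩)
      obtain ⟨e, rfl⟩ := fst_mem_range_of_mem_rlSem_amalgam (hrs s List.mem_cons_self) hz
      obtain ⟨e', he', rfl⟩ := (H.mem_chain_iff_mem_image hrs e w).mp ⟨z, hz, hzw⟩
      exact (H.mem_rlSem_iff hrb e e').mpr (hI he')
  | cassert | rassert => exact H.satAx nofun (subset_univ _) hr hf hi hI

end Amalgam

theorem exists_model_of_sat_pos {K O : Set Ax} (hO : O.Finite) (hdmup : DMUP (termPart O))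
    (hloc : LocalWrt (termPart K) (sigC O) (sigR O) (sigF O))
    (hR : sigR K ⊆ (sigR O)ᶜ) (hF : sigF K ⊆ (sigF O)ᶜ) (hI : sigI K ⊆ (sigI O)ᶜ)
    {I : Interp} (hIK : I.sat K) (hIQ : ∀ q ∈ pos O, I.satQ q) :
    ∃ (M : Interp) (g : I.Δ → M.Δ), M.sat K ∧ M.sat O ∧
      IsSigEmbedding I M g univ (sigR O)ᶜ (sigF O)ᶜ (sigI O)ᶜ := by
  choose J x hJ hx using exists_model_realizing_type (sigC_finite hO) hIQ
  obtain ⟨d⟩ := I.nonempty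
  let g : I.Δ → (sigmaUnion J d).Δ := fun e => ⟨e, x e⟩
  have hg : Injective g := fun e e' h => congrArg Sigma.fst h
  have hconc : ∀ a ∈ sigC O, ∀ e, g e ∈ (sigmaUnion J d).conc a ↔ e ∈ I.conc a :=
    fun a ha e => hx e a ha
  let M := amalgam I (sigmaUnion J d) g (sigC O) (sigR O) (sigF O) (sigI O)
  refine ⟨M, g, fun ax hax => ?_, fun ax hax => ?_, isSigEmbedding_amalgam_left hg hconc⟩
  · exact amalgam_satAx_of_disjoint hg hconc (fun n hn => hR ⟨ax, hax, hn⟩)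
      (fun n hn => hF ⟨ax, hax, hn⟩) (fun n hn => hI ⟨ax, hax, hn⟩) (hIK ax hax)
      fun ht => hloc M ax ⟨hax, ht⟩
  · exact isSigEmbedding_amalgam_right.satAx (fun _ => surjective_id)
      (fun n hn => ⟨ax, hax, hn⟩) (fun n hn => ⟨ax, hax, hn⟩) (fun n hn => ⟨ax, hax, hn⟩)
      (fun n hn => ⟨ax, hax, hn⟩) (sigmaUnion_sat hdmup hJ d ax hax)

theorem statement_6_general (K O : Set Ax) (hO : O.Finite)
    (Cα Dα : Cpt)
    (h2 : DMUP (termPart O))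
    (h3 : LocalWrt (termPart K) (sigC O) (sigR O) (sigF O))
    (h4R : (sigR K ∪ Cα.rNames ∪ Dα.rNames) ∩ sigR O = ∅)
    (h4F : (sigF K ∪ Cα.fNames ∪ Dα.fNames) ∩ sigF O = ∅)
    (h4I : (sigI K ∪ Cα.iNames ∪ Dα.iNames) ∩ sigI O = ∅) :
    ((∀ I : Interp, I.sat K → I.sat O → Cpt.sem I Cα ⊆ Cpt.sem I Dα) ↔
      (∀ I : Interp, I.sat K → (∀ q ∈ pos O, I.satQ q) → Cpt.sem I Cα ⊆ Cpt.sem I Dα)) := by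
  refine ⟨fun hKO I hIK hIQ => ?_, fun hKQ I hIK hIO => hKQ I hIK fun q hq => hq.2.2 I hIO⟩
  have hR := (disjoint_iff_inter_eq_empty.mpr h4R).subset_compl_right
  have hF := (disjoint_iff_inter_eq_empty.mpr h4F).subset_compl_right
  have hI := (disjoint_iff_inter_eq_empty.mpr h4I).subset_compl_right
  simp only [union_subset_iff] at hR hF hI
  obtain ⟨M, g, hMK, hMO, H⟩ := exists_model_of_sat_pos hO h2 h3 hR.1.1 hF.1.1 hI.1.1 hIK hIQ
  intro d hd
  have hC := H.mem_sem_iff (subset_univ _) hR.1.2 hF.1.2 hI.1.2 d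
  have hD := H.mem_sem_iff (subset_univ _) hR.2 hF.2 hI.2 d
  exact hD.mp (hKO M hMK hMO (hC.mpr hd))

/-- let `K` and `O` be knowledge bases and `α = (Cα ⊑ Dα)` a GCI such
    that (1) `K` and `α` are in SROIQ(D) without the universal role, with the
    concrete domain of integer intervals (built into the syntax used here);
    (2) the terminological part of `O` enjoys the disjoint model union property;
    (3) the terminological part of `K` is local w.r.t. `sig(O)`; and
    (4) `(sig(K) ∪ sig(α)) ∩ sig(O)` contains only concept names.
    Then `K ∪ O ⊨ α` iff `K ∪ pos(O) ⊨ α`. -/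
theorem statement_6 (K O : Set Ax) (hK : K.Finite) (hO : O.Finite)
    (Cα Dα : Cpt)
    (hNoIndO : ∀ ax ∈ termPart O, Ax.iNames ax = ∅)
    (h2 : DMUP (termPart O))
    (h3 : LocalWrt (termPart K) (sigC O) (sigR O) (sigF O))
    (h4R : (sigR K ∪ Cα.rNames ∪ Dα.rNames) ∩ sigR O = ∅)
    (h4F : (sigF K ∪ Cα.fNames ∪ Dα.fNames) ∩ sigF O = ∅)
    (h4I : (sigI K ∪ Cα.iNames ∪ Dα.iNames) ∩ sigI O = ∅) :
    ((∀ I : Interp, I.sat K → I.sat O → Cpt.sem I Cα ⊆ Cpt.sem I Dα) ↔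
      (∀ I : Interp, I.sat K → (∀ q ∈ pos O, I.satQ q) → Cpt.sem I Cα ⊆ Cpt.sem I Dα)) :=
  statement_6_general K O hO Cα Dα h2 h3 h4R h4F h4I

end SROIQPaper
end

section
/- For every PL subsumption instance with oracle (K, O, q), letting K_O^- be the set of range and functionality axioms of K and O_K^+ = O ∪ (K \ K_O^-), we have: K ∪ O ⊨ q if and only if K_O^- ∪ pos(O_K^+) ⊨ q. -/
/-! A point `d` of a model `I` of `K_O⁻ ∪ pos(O_K⁺)` has a type: the concept names of
`sig(O_K⁺)` it belongs to. As `pos(O_K⁺)` contains no query refuting this type, some model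
`J d` of `O_K⁺` realizes it at a point `e d`. Glue the disjoint union of the `J d` onto `I`,
identifying `d` with `e d`: the roles of `O` live inside the components, all other roles link
the points `e d` as in `I`. Since `O` shares only concept names with `K` and the query, the
result is a model of `K ∪ O` which agrees with `I` on the query at the points `e d`.
The converse holds because every model of `K ∪ O` is a model of `K_O⁻ ∪ pos(O_K⁺)`. -/

namespace PLPaper

lemma finite_setOf_exists_mem {α β : Type*} {s : Set α} (hs : s.Finite) {f : α → Set β}
    (hf : ∀ a, (f a).Finite) : {b | ∃ a ∈ s, b ∈ f a}.Finite :=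
  (hs.biUnion fun a _ => hf a).subset fun _ ⟨_, ha, hb⟩ => Set.mem_biUnion ha hb

lemma HAtom.cNames_finite (a : HAtom) : a.cNames.Finite := by
  cases a <;> simp [HAtom.cNames]

lemma HAx.cNames_finite (ax : HAx) : ax.cNames.Finite := by
  cases ax <;> simp [HAx.cNames, HAtom.cNames_finite]

lemma PLAx.cNames_finite (ax : PLAx) : ax.cNames.Finite := by
  cases ax <;> simp [PLAx.cNames]

lemma cNamesOplus_finite {K : Set PLAx} {O : Set HAx} (hK : K.Finite) (hO : O.Finite) :
    (cNamesOplus K O).Finite :=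
  (finite_setOf_exists_mem hO HAx.cNames_finite).union
    (finite_setOf_exists_mem (hK.subset fun _ h => h.1) PLAx.cNames_finite)

lemma exists_satOplus_realizing_type {K : Set PLAx} {O : Set HAx}
    (hfin : (cNamesOplus K O).Finite) {I : Interp} (hpos : ∀ q ∈ posOplus K O, I.satQ q)
    (d : I.Δ) :
    ∃ (J : Interp) (e : J.Δ), satOplus J K O ∧
      ∀ A ∈ cNamesOplus K O, (e ∈ J.conc A ↔ d ∈ I.conc A) := by
  classical
  let type : OQuery := ⟨(hfin.toFinset.filter (d ∈ I.conc ·)).toList,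
    (hfin.toFinset.filter (d ∉ I.conc ·)).toList⟩
  have htype_not_pos : type ∉ posOplus K O := by
    intro hmem
    have hd : d ∈ {x | ∀ a ∈ type.lhs, x ∈ I.conc a} := fun a ha => by simp_all [type]
    obtain ⟨b, hb, hdb⟩ := hpos type hmem hd
    simp_all [type]
  obtain ⟨J, hJ, hJtype⟩ : ∃ J, satOplus J K O ∧ ¬ J.satQ type := by
    by_contra! h
    exact htype_not_pos ⟨by simp +contextual [type], by simp +contextual [type], h⟩
  obtain ⟨e, he_lhs, he_rhs⟩ := Set.not_subset.mp hJtype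
  refine ⟨J, e, hJ, fun A hA => ⟨fun heA => ?_, fun hdA => he_lhs A (by simp [type, hA, hdA])⟩⟩
  by_contra hdA
  exact he_rhs ⟨A, by simp [type, hA, hdA], heA⟩

section Glue

variable (I : Interp) (J : I.Δ → Interp) (e : ∀ d, (J d).Δ) (SC SR : Set ℕ)

/-- The point `⟨d, e d⟩` plays the role of `d`. Concept names in `SC` and role names in `SR`
are interpreted inside the components `J d`, all other names as in `I` on these points. -/
def Interp.glue : Interp where
  Δ := Σ d : I.Δ, (J d).Δ
  nonempty := ⟨⟨Classical.choice I.nonempty, e _⟩⟩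
  conc A := {p | (A ∈ SC ∧ p.2 ∈ (J p.1).conc A) ∨
      (A ∉ SC ∧ p.2 = e p.1 ∧ p.1 ∈ I.conc A)}
  role r := {pq | (r ∈ SR ∧ ∃ d x y, (x, y) ∈ (J d).role r ∧ pq.1 = ⟨d, x⟩ ∧ pq.2 = ⟨d, y⟩) ∨
      (r ∉ SR ∧ ∃ d d', (d, d') ∈ I.role r ∧ pq.1 = ⟨d, e d⟩ ∧ pq.2 = ⟨d', e d'⟩)}
  cprop f := {pi | pi.1.2 = e pi.1.1 ∧ (pi.1.1, pi.2) ∈ I.cprop f}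

variable {I J e SC SR}

lemma glue_role_mk_left_iff {r : ℕ} (hr : r ∈ SR) {d : I.Δ} {x : (J d).Δ}
    {q : (I.glue J e SC SR).Δ} :
    (⟨d, x⟩, q) ∈ (I.glue J e SC SR).role r ↔ ∃ y, (x, y) ∈ (J d).role r ∧ q = ⟨d, y⟩ := by
  constructor
  · rintro (⟨-, d₀, x₀, y, hxy, h₁, rfl⟩ | ⟨hr', -⟩)
    · cases h₁
      exact ⟨y, hxy, rfl⟩
    · exact absurd hr hr'
  · rintro ⟨y, hxy, rfl⟩
    exact Or.inl ⟨hr, d, x, y, hxy, rfl, rfl⟩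

lemma glue_role_mk_right_iff {r : ℕ} (hr : r ∈ SR) {d : I.Δ} {y : (J d).Δ}
    {q : (I.glue J e SC SR).Δ} :
    (q, ⟨d, y⟩) ∈ (I.glue J e SC SR).role r ↔ ∃ x, (x, y) ∈ (J d).role r ∧ q = ⟨d, x⟩ := by
  constructor
  · rintro (⟨-, d₀, x, y₀, hxy, rfl, h₂⟩ | ⟨hr', -⟩)
    · cases h₂
      exact ⟨x, hxy, rfl⟩
    · exact absurd hr hr'
  · rintro ⟨x, hxy, rfl⟩
    exact Or.inl ⟨hr, d, x, y, hxy, rfl, rfl⟩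

lemma glue_hrole_mk_left_iff {s : HRole} (hs : s.base ∈ SR) {d : I.Δ} {x : (J d).Δ}
    {q : (I.glue J e SC SR).Δ} :
    (⟨d, x⟩, q) ∈ s.sem (I.glue J e SC SR) ↔ ∃ y, (x, y) ∈ s.sem (J d) ∧ q = ⟨d, y⟩ := by
  cases s with
  | name r => exact glue_role_mk_left_iff hs
  | inv r => exact glue_role_mk_right_iff (r := r) hs

lemma glue_semChain_mk_left_iff {rs : List HRole} (hrs : ∀ s ∈ rs, s.base ∈ SR) {d : I.Δ}
    {x : (J d).Δ} {q : (I.glue J e SC SR).Δ} :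
    (⟨d, x⟩, q) ∈ HRole.semChain (I.glue J e SC SR) rs ↔
      ∃ y, (x, y) ∈ HRole.semChain (J d) rs ∧ q = ⟨d, y⟩ := by
  induction rs generalizing x with
  | nil => exact ⟨fun h => ⟨x, rfl, h.symm⟩, fun ⟨_, hxy, hq⟩ => hq ▸ congrArg _ hxy⟩
  | cons s rs ih =>
    have hs := hrs s List.mem_cons_self
    have hrs' : ∀ s' ∈ rs, s'.base ∈ SR := fun s' hs' => hrs s' (List.mem_cons_of_mem _ hs')
    constructor
    · rintro ⟨z, hxz, hzq⟩
      obtain ⟨y, hxy, rfl⟩ := (glue_hrole_mk_left_iff hs).mp hxz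
      obtain ⟨w, hyw, rfl⟩ := (ih hrs').mp hzq
      exact ⟨w, ⟨y, hxy, hyw⟩, rfl⟩
    · rintro ⟨w, ⟨y, hxy, hyw⟩, rfl⟩
      exact ⟨⟨d, y⟩, (glue_hrole_mk_left_iff hs).mpr ⟨y, hxy, rfl⟩, (ih hrs').mpr ⟨w, hyw, rfl⟩⟩

lemma glue_hatom_mk_iff {a : HAtom} (hc : a.cNames ⊆ SC) (hr : a.rNames ⊆ SR)
    {d : I.Δ} {x : (J d).Δ} :
    (⟨d, x⟩ : (I.glue J e SC SR).Δ) ∈ a.sem (I.glue J e SC SR) ↔ x ∈ a.sem (J d) := by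
  cases a with
  | name A =>
    have hA : A ∈ SC := hc rfl
    exact ⟨fun h => h.elim And.right fun h => absurd hA h.1, fun h => Or.inl ⟨hA, h⟩⟩
  | top => exact iff_of_true trivial trivial
  | bot => exact Iff.rfl
  | self s =>
    refine (glue_hrole_mk_left_iff (hr rfl)).trans ⟨?_, fun h => ⟨x, h, rfl⟩⟩
    rintro ⟨y, hxy, hy⟩
    cases hy
    exact hxy

lemma glue_satHAx {ax : HAx} (hax : ∀ d, (J d).satHAx ax) (hc : ax.cNames ⊆ SC)
    (hr : ax.rNames ⊆ SR) : (I.glue J e SC SR).satHAx ax := by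
  cases ax <;> simp only [HAx.cNames, HAx.rNames, Set.union_subset_iff, Set.insert_subset_iff,
    Set.singleton_subset_iff] at hc hr
  case sub2 a₁ a₂ b =>
    rintro ⟨d, x⟩ ⟨h₁, h₂⟩
    exact (glue_hatom_mk_iff hc.2 hr.2).mpr (hax d
      ⟨(glue_hatom_mk_iff hc.1.1 hr.1.1).mp h₁, (glue_hatom_mk_iff hc.1.2 hr.1.2).mp h₂⟩)
  case subEx s a b =>
    rintro ⟨d, x⟩ ⟨q, hxq, hq⟩
    obtain ⟨y, hxy, rfl⟩ := (glue_hrole_mk_left_iff hr.1).mp hxq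
    exact (glue_hatom_mk_iff hc.2 hr.2.2).mpr
      (hax d ⟨y, hxy, (glue_hatom_mk_iff hc.1 hr.2.1).mp hq⟩)
  case subAll a s b =>
    rintro ⟨d, x⟩ q hx hxq
    obtain ⟨y, hxy, rfl⟩ := (glue_hrole_mk_left_iff hr.1).mp hxq
    exact (glue_hatom_mk_iff hc.2 hr.2.2).mpr
      (hax d ((glue_hatom_mk_iff hc.1 hr.2.1).mp hx) hxy)
  case subToEx a s b =>
    rintro ⟨d, x⟩ hx
    obtain ⟨y, hxy, hy⟩ := hax d ((glue_hatom_mk_iff hc.1 hr.2.1).mp hx)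
    exact ⟨⟨d, y⟩, (glue_hrole_mk_left_iff hr.1).mpr ⟨y, hxy, rfl⟩,
      (glue_hatom_mk_iff hc.2 hr.2.2).mpr hy⟩
  case atMost1 a s b =>
    rintro ⟨d, x⟩ q q' hx hxq hq hxq' hq'
    obtain ⟨y, hxy, rfl⟩ := (glue_hrole_mk_left_iff hr.1).mp hxq
    obtain ⟨y', hxy', rfl⟩ := (glue_hrole_mk_left_iff hr.1).mp hxq'
    exact congrArg _ (hax d ((glue_hatom_mk_iff hc.1 hr.2.1).mp hx) hxy
      ((glue_hatom_mk_iff hc.2 hr.2.2).mp hq) hxy' ((glue_hatom_mk_iff hc.2 hr.2.2).mp hq'))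
  case atLeast a n s b =>
    rintro ⟨d, x⟩ hx
    obtain ⟨t, hcard, ht⟩ := hax d ((glue_hatom_mk_iff hc.1 hr.2.1).mp hx)
    refine ⟨t.map ⟨Sigma.mk d, sigma_mk_injective⟩, by simpa using hcard, ?_⟩
    simp only [Finset.mem_map, forall_exists_index, and_imp]
    rintro _ y hy rfl
    exact ⟨(glue_hrole_mk_left_iff hr.1).mpr ⟨y, (ht y hy).1, rfl⟩,
      (glue_hatom_mk_iff hc.2 hr.2.2).mpr (ht y hy).2⟩
  case rIncl rs s =>
    rintro ⟨⟨d, x⟩, q⟩ hxq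
    obtain ⟨y, hxy, rfl⟩ := (glue_semChain_mk_left_iff fun s' hs' => hr.2 ⟨s', hs', rfl⟩).mp hxq
    exact (glue_hrole_mk_left_iff hr.1).mpr ⟨y, hax d hxy, rfl⟩
  case rDisj s₁ s₂ =>
    refine Set.eq_empty_of_forall_notMem ?_
    rintro ⟨⟨d, x⟩, q⟩ ⟨h₁, h₂⟩
    obtain ⟨y, hxy, rfl⟩ := (glue_hrole_mk_left_iff hr.1).mp h₁
    obtain ⟨y', hxy', hy⟩ := (glue_hrole_mk_left_iff hr.2).mp h₂
    cases hy
    exact Set.eq_empty_iff_forall_notMem.mp (hax d) _ ⟨hxy, hxy'⟩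

lemma glue_satAx_of_isRF {ax : PLAx} (hRF : isRF ax) (hax : I.satAx ax)
    (hr : ∀ r ∈ ax.rNames, r ∉ SR) (htype : ∀ d, ∀ A ∈ SC, (e d ∈ (J d).conc A ↔ d ∈ I.conc A)) :
    (I.glue J e SC SR).satAx ax := by
  cases ax with
  | funcRole r =>
    rintro p q q' (⟨hr', -⟩ | ⟨-, d, d', hdd', rfl, rfl⟩) h'
    · exact absurd hr' (hr r rfl)
    rcases h' with ⟨hr', -⟩ | ⟨-, d₀, d'', hdd'', h₀, rfl⟩
    · exact absurd hr' (hr r rfl)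
    cases h₀
    rw [hax hdd' hdd'']
  | funcProp f =>
    rintro p i j ⟨-, hi⟩ ⟨-, hj⟩
    exact hax hi hj
  | rangeAx r A =>
    rintro p q (⟨hr', -⟩ | ⟨-, d, d', hdd', rfl, rfl⟩)
    · exact absurd hr' (hr r rfl)
    by_cases hA : A ∈ SC
    · exact Or.inl ⟨hA, (htype d' A hA).mpr (hax hdd')⟩
    · exact Or.inr ⟨hA, rfl, hax hdd'⟩
  | incl | disj => exact hRF.elim

lemma glue_satAx_of_not_isRF {ax : PLAx} (hRF : ¬ isRF ax) (hax : ∀ d, (J d).satAx ax)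
    (hc : ax.cNames ⊆ SC) : (I.glue J e SC SR).satAx ax := by
  cases ax with
  | incl A B =>
    obtain ⟨hA, hB⟩ : A ∈ SC ∧ B ∈ SC := by simpa [PLAx.cNames, Set.insert_subset_iff] using hc
    rintro p (⟨-, hp⟩ | ⟨hA', -⟩)
    · exact Or.inl ⟨hB, hax p.1 hp⟩
    · contradiction
  | disj A B =>
    obtain ⟨hA, hB⟩ : A ∈ SC ∧ B ∈ SC := by simpa [PLAx.cNames, Set.insert_subset_iff] using hc
    refine Set.eq_empty_of_forall_notMem ?_
    rintro p ⟨⟨-, hpA⟩ | ⟨hA', -⟩, ⟨-, hpB⟩ | ⟨hB', -⟩⟩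
    · exact Set.eq_empty_iff_forall_notMem.mp (hax p.1) p.2 ⟨hpA, hpB⟩
    all_goals contradiction
  | funcRole | funcProp | rangeAx => exact (hRF trivial).elim

lemma glue_mem_sem_iff (htype : ∀ d, ∀ A ∈ SC, (e d ∈ (J d).conc A ↔ d ∈ I.conc A))
    {c : SPL} (hc : ∀ r ∈ c.rNames, r ∉ SR) (d : I.Δ) :
    (⟨d, e d⟩ : (I.glue J e SC SR).Δ) ∈ c.sem (I.glue J e SC SR) ↔ d ∈ c.sem I := by
  induction c generalizing d with
  | atom A =>
    show (A ∈ SC ∧ e d ∈ (J d).conc A) ∨ (A ∉ SC ∧ e d = e d ∧ d ∈ I.conc A) ↔ d ∈ I.conc A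
    by_cases hA : A ∈ SC <;> simp [hA, htype d A]
  | bot => exact Iff.rfl
  | ival f l u =>
    show (∃ i, l ≤ i ∧ i ≤ u ∧ e d = e d ∧ (d, i) ∈ I.cprop f) ↔ _
    simp only [true_and]
    rfl
  | ex r c ih =>
    have hr : r ∉ SR := hc r (Set.mem_insert _ _)
    have ih := ih fun r' hr' => hc r' (Set.mem_insert_of_mem _ hr')
    constructor
    · rintro ⟨q, ⟨hr', -⟩ | ⟨-, d₀, d', hdd', h₀, rfl⟩, hq⟩
      · exact absurd hr' hr
      cases h₀
      exact ⟨d', hdd', (ih d').mp hq⟩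
    · rintro ⟨d', hdd', hd'⟩
      exact ⟨⟨d', e d'⟩, Or.inr ⟨hr, d, d', hdd', rfl, rfl⟩, (ih d').mpr hd'⟩
  | inter c₁ c₂ ih₁ ih₂ =>
    exact and_congr (ih₁ (fun r h => hc r (Or.inl h)) d) (ih₂ (fun r h => hc r (Or.inr h)) d)

lemma glue_mem_semL_iff (htype : ∀ d, ∀ A ∈ SC, (e d ∈ (J d).conc A ↔ d ∈ I.conc A))
    {C : PLC} (hC : ∀ r ∈ rNamesL C, r ∉ SR) (d : I.Δ) :
    (⟨d, e d⟩ : (I.glue J e SC SR).Δ) ∈ semL (I.glue J e SC SR) C ↔ d ∈ semL I C :=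
  exists_congr fun c => and_congr_right fun hc =>
    glue_mem_sem_iff htype (fun r hr => hC r ⟨c, hc, hr⟩) d

end Glue

lemma entailsShift_of_entailsKO {K : Set PLAx} {O : Set HAx} {C D : PLC} (hK : K.Finite)
    (hO : O.Finite) (hsig : (rNamesPL K ∪ rNamesL C ∪ rNamesL D) ∩ rNamesH O = ∅)
    (h : EntailsKO K O C D) : EntailsShift K O C D := by
  obtain ⟨⟨hKsig, hCsig⟩, hDsig⟩ : (Disjoint (rNamesPL K) (rNamesH O) ∧
      Disjoint (rNamesL C) (rNamesH O)) ∧ Disjoint (rNamesL D) (rNamesH O) := by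
    simpa only [Set.disjoint_union_left] using Set.disjoint_iff_inter_eq_empty.mpr hsig
  intro I hI hpos d hd
  choose J e hJ htype using exists_satOplus_realizing_type (cNamesOplus_finite hK hO) hpos
  let G := I.glue J e (cNamesOplus K O) (rNamesH O)
  have hGK : G.satKB K := by
    intro ax hax
    by_cases hRF : isRF ax
    · exact glue_satAx_of_isRF hRF (hI ax ⟨hax, hRF⟩)
        (fun r hr => Set.disjoint_left.mp hKsig ⟨ax, hax, hr⟩) htype
    · exact glue_satAx_of_not_isRF hRF (fun d => (hJ d).2 ax ⟨hax, hRF⟩)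
        fun A hA => Or.inr ⟨ax, ⟨hax, hRF⟩, hA⟩
  have hGO : G.satHKB O := fun ax hax =>
    glue_satHAx (fun d => (hJ d).1 ax hax) (fun A hA => Or.inl ⟨ax, hax, hA⟩)
      fun r hr => ⟨ax, hax, hr⟩
  rw [← glue_mem_semL_iff htype fun r hr => Set.disjoint_left.mp hCsig hr] at hd
  rw [← glue_mem_semL_iff htype fun r hr => Set.disjoint_left.mp hDsig hr]
  exact h G hGK hGO hd

lemma entailsKO_of_entailsShift {K : Set PLAx} {O : Set HAx} {C D : PLC}
    (h : EntailsShift K O C D) : EntailsKO K O C D := fun I hK hO =>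
  h I (fun ax hax => hK ax hax.1) fun _ hq => hq.2.2 I ⟨hO, fun ax hax => hK ax hax.1⟩

theorem statement_7_general (K : Set PLAx) (O : Set HAx) (C D : PLC)
    (hK : K.Finite) (hO : O.Finite)
    (hsig : (rNamesPL K ∪ rNamesL C ∪ rNamesL D) ∩ rNamesH O = ∅) :
    EntailsKO K O C D ↔ EntailsShift K O C D :=
  ⟨entailsShift_of_entailsKO hK hO hsig, entailsKO_of_entailsShift⟩

/-- for every PL subsumption instance with oracle `(K, O, C ⊑ D)`
    (K a PL KB, O a Horn-SRIQ KB, sharing only concept names with `K` and the query),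
    `K ∪ O ⊨ C ⊑ D` iff `K_O⁻ ∪ pos(O_K⁺) ⊨ C ⊑ D`. -/
theorem statement_7 (K : Set PLAx) (O : Set HAx) (C D : PLC)
    (hK : K.Finite) (hO : O.Finite) (hC : C ≠ []) (hD : D ≠ [])
    (hsig : (rNamesPL K ∪ rNamesL C ∪ rNamesL D) ∩ rNamesH O = ∅) :
    EntailsKO K O C D ↔ EntailsShift K O C D :=
  statement_7_general K O C D hK hO hsig

end PLPaper
end
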